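/- arXiv:2109.07606 — 8 statements merged into one kernel-verified Lean document; each statement's English description precedes it below -/
import Mathlib

section
/- Under the setup, for every edge e = (u, v) ∈ E⁺, every edge of the unique path π_T̂(u, v) between u and v in the spanning tree T̂ belongs to G; consequently the cycle γ consisting of the edge e together with π_T̂(u, v) is entirely contained in G. (Lemma 4.4 of the paper.) -/
/-!
Let `H` be the subgraph of `T̂` formed by the edges lying in `G`. For every edge `(x, y)` of
`E⁻ ∪ E⁺` the two root paths `path(x)`, `path(y)` lie in `G`, so `x` and `y` are joined in `H`
to their roots and, through the edge `(x, y)` itself, to each other. Edges of `𝒯` join vertices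
with the same root, so any two `T̂`-adjacent vertices have `H`-connected roots; following the
tree path from `u` to `v` shows `H.Reachable u v` for `(u, v) ∈ E⁺`. Since `T̂` is acyclic, the
`H`-path from `u` to `v` must be the tree path `π_T̂(u, v)`, which therefore lies in `G`.
-/

open SimpleGraph

namespace SimpleGraph

variable {V W : Type*} {G H : SimpleGraph V}

theorem Reachable.map_of_forall_adj {G' : SimpleGraph W} (f : V → W)
    (hf : ∀ a b, G.Adj a b → G'.Reachable (f a) (f b)) {u v : V} (h : G.Reachable u v) :
    G'.Reachable (f u) (f v) := by
  rw [reachable_eq_reflTransGen] at h hf ⊢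
  exact Relation.ReflTransGen.lift' f hf _ _ h

theorem IsAcyclic.edges_subset_edgeSet_of_reachable (hG : G.IsAcyclic) (hHG : H ≤ G) {u v : V}
    (huv : H.Reachable u v) {p : G.Walk u v} (hp : p.IsPath) :
    ∀ e ∈ p.edges, e ∈ H.edgeSet := by
  classical
  obtain ⟨w⟩ := huv
  have hp_eq : p = (w.mapLe hHG).bypass := congrArg Subtype.val <|
    (hG.subsingleton_path u v).elim ⟨p, hp⟩ ⟨_, (w.mapLe hHG).bypass_isPath⟩
  intro e he
  rw [hp_eq] at he
  have he' := (w.mapLe hHG).edges_bypass_subset_edges he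
  rw [Walk.edges_mapLe_eq_edges] at he'
  exact w.edges_subset_edgeSet he'

end SimpleGraph

theorem lemma_4_4_cycle_in_G_general
    {V : Type*}
    -- `F` is a spanning forest of `K` (an acyclic subgraph on all of `V`)
    (F : SimpleGraph V)
    -- a choice of root in each connected component of `F`
    (root : V → V)
    (hrootConst : ∀ u v : V, F.Reachable u v → root u = root v)
    -- `pathToRoot v` is the unique path in `F` from `v` to the root of its component
    (pathToRoot : (v : V) → F.Walk v (root v))
    -- `Eneg` and `Epos` are disjoint sets of edges of `K`, disjoint from the edges of `F`
    (Eneg Epos : Set (Sym2 V))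
    -- `That` (= T̂) is the spanning tree with edge set E(F) ∪ Eneg
    (That : SimpleGraph V)
    (hThatEdges : That.edgeSet = F.edgeSet ∪ Eneg)
    (hThatTree : That.IsTree)
    -- `GEdges` is the edge set of the output graph G: the union over e = (u,v) ∈ Eneg ∪ Epos
    -- of {e} ∪ path(u) ∪ path(v); `GVerts` is the set of vertices incident to an edge of G
    (GEdges : Set (Sym2 V))
    (hGEdges : GEdges = {s : Sym2 V | ∃ u v : V, s(u, v) ∈ Eneg ∪ Epos ∧
        (s = s(u, v) ∨ s ∈ (pathToRoot u).edges ∨ s ∈ (pathToRoot v).edges)}) :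
    ∀ u v : V, s(u, v) ∈ Epos →
      ∀ (p : That.Walk u v), p.IsPath →
        (∀ e ∈ p.edges, e ∈ GEdges) ∧ s(u, v) ∈ GEdges := by
  intro u v huv p hp
  have mem_G : ∀ {x y}, s(x, y) ∈ Eneg ∪ Epos → s(x, y) ∈ GEdges ∧
      (∀ e ∈ (pathToRoot x).edges, e ∈ GEdges) ∧
      ∀ e ∈ (pathToRoot y).edges, e ∈ GEdges := by
    intro x y hxy
    subst hGEdges
    exact ⟨⟨x, y, hxy, .inl rfl⟩, fun _ he => ⟨x, y, hxy, .inr (.inl he)⟩,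
      fun _ he => ⟨x, y, hxy, .inr (.inr he)⟩⟩
  set H := That.deleteEdges GEdgesᶜ
  have F_le_That : F ≤ That := edgeSet_subset_edgeSet.1 (hThatEdges ▸ Set.subset_union_left)
  have reach_root :
      ∀ x, (∀ e ∈ (pathToRoot x).edges, e ∈ GEdges) → H.Reachable x (root x) :=
    fun x hx => ⟨(pathToRoot x).transfer H fun e he => by
      rw [edgeSet_deleteEdges]
      exact ⟨edgeSet_subset_edgeSet.2 F_le_That ((pathToRoot x).edges_subset_edgeSet he),
        not_not.2 (hx e he)⟩⟩
  have roots_reach : ∀ a b, That.Adj a b → H.Reachable (root a) (root b) := by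
    intro a b hab
    rcases (hThatEdges ▸ hab : s(a, b) ∈ F.edgeSet ∪ Eneg) with hF | hN
    · rw [hrootConst a b (Adj.reachable hF)]
    · obtain ⟨hab_G, ha, hb⟩ := mem_G (.inl hN)
      have hab_H : H.Adj a b := deleteEdges_adj.2 ⟨hab, not_not.2 hab_G⟩
      exact (reach_root a ha).symm.trans (hab_H.reachable.trans (reach_root b hb))
  obtain ⟨huv_G, hu, hv⟩ := mem_G (.inr huv)
  have huv_H : H.Reachable u v := (reach_root u hu).trans
    ((Reachable.map_of_forall_adj root roots_reach ⟨p⟩).trans (reach_root v hv).symm)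
  have hp_H := hThatTree.isAcyclic.edges_subset_edgeSet_of_reachable
    (deleteEdges_le _) huv_H hp
  rw [edgeSet_deleteEdges] at hp_H
  exact ⟨fun e he => not_not.1 (hp_H e he).2, huv_G⟩

/-- Lemma 4.4: for every edge e = (u,v) ∈ E⁺, every edge of the unique path between u and v in the spanning tree T̂ belongs to G; consequently the cycle consisting of e together with that path is entirely contained in G. -/
theorem lemma_4_4_cycle_in_G
    {V : Type*} [Fintype V] [DecidableEq V]
    -- `K` is a finite connected simple graph on vertex set `V`
    (K : SimpleGraph V) (hK : K.Connected)
    -- `F` is a spanning forest of `K` (an acyclic subgraph on all of `V`)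
    (F : SimpleGraph V) (hFK : F ≤ K) (hFacyclic : F.IsAcyclic)
    -- a choice of root in each connected component of `F`
    (root : V → V)
    (hrootReach : ∀ v : V, F.Reachable v (root v))
    (hrootConst : ∀ u v : V, F.Reachable u v → root u = root v)
    -- `pathToRoot v` is the unique path in `F` from `v` to the root of its component
    (pathToRoot : (v : V) → F.Walk v (root v))
    (hpathToRoot : ∀ v : V, (pathToRoot v).IsPath)
    -- `Eneg` and `Epos` are disjoint sets of edges of `K`, disjoint from the edges of `F`
    (Eneg Epos : Set (Sym2 V))
    (hEnegK : Eneg ⊆ K.edgeSet) (hEposK : Epos ⊆ K.edgeSet)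
    (hdisjNP : Disjoint Eneg Epos)
    (hdisjNF : Disjoint Eneg F.edgeSet) (hdisjPF : Disjoint Epos F.edgeSet)
    -- `That` (= T̂) is the spanning tree with edge set E(F) ∪ Eneg
    (That : SimpleGraph V)
    (hThatEdges : That.edgeSet = F.edgeSet ∪ Eneg)
    (hThatTree : That.IsTree)
    -- `GEdges` is the edge set of the output graph G: the union over e = (u,v) ∈ Eneg ∪ Epos
    -- of {e} ∪ path(u) ∪ path(v); `GVerts` is the set of vertices incident to an edge of G
    (GEdges : Set (Sym2 V))
    (hGEdges : GEdges = {s : Sym2 V | ∃ u v : V, s(u, v) ∈ Eneg ∪ Epos ∧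
        (s = s(u, v) ∨ s ∈ (pathToRoot u).edges ∨ s ∈ (pathToRoot v).edges)})
    (GVerts : Set V)
    (hGVerts : GVerts = {x : V | ∃ s ∈ GEdges, x ∈ s}) :
    ∀ u v : V, s(u, v) ∈ Epos →
      ∀ (p : That.Walk u v), p.IsPath →
        (∀ e ∈ p.edges, e ∈ GEdges) ∧ s(u, v) ∈ GEdges :=
  lemma_4_4_cycle_in_G_general F root hrootConst pathToRoot Eneg Epos That hThatEdges hThatTree
    GEdges hGEdges
end

section
/- Under the setup, if E⁻ ∪ E⁺ is nonempty, then the subgraph G is connected. (The β₀ part of Lemma 4.5 of the paper.) -/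
open SimpleGraph

/-- The β₀ part of Lemma 4.5: if E⁻ ∪ E⁺ is nonempty, then the output graph G is connected. -/
theorem lemma_4_5_G_connected
    {V : Type*} [Fintype V] [DecidableEq V]
    -- `K` is a finite connected simple graph on vertex set `V`
    (K : SimpleGraph V) (hK : K.Connected)
    -- `F` is a spanning forest of `K` (an acyclic subgraph on all of `V`)
    (F : SimpleGraph V) (hFK : F ≤ K) (hFacyclic : F.IsAcyclic)
    -- a choice of root in each connected component of `F`
    (root : V → V)
    (hrootReach : ∀ v : V, F.Reachable v (root v))
    (hrootConst : ∀ u v : V, F.Reachable u v → root u = root v)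
    -- `pathToRoot v` is the unique path in `F` from `v` to the root of its component
    (pathToRoot : (v : V) → F.Walk v (root v))
    (hpathToRoot : ∀ v : V, (pathToRoot v).IsPath)
    -- `Eneg` and `Epos` are disjoint sets of edges of `K`, disjoint from the edges of `F`
    (Eneg Epos : Set (Sym2 V))
    (hEnegK : Eneg ⊆ K.edgeSet) (hEposK : Epos ⊆ K.edgeSet)
    (hdisjNP : Disjoint Eneg Epos)
    (hdisjNF : Disjoint Eneg F.edgeSet) (hdisjPF : Disjoint Epos F.edgeSet)
    -- `That` (= T̂) is the spanning tree with edge set E(F) ∪ Eneg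
    (That : SimpleGraph V)
    (hThatEdges : That.edgeSet = F.edgeSet ∪ Eneg)
    (hThatTree : That.IsTree)
    -- `GEdges` is the edge set of the output graph G: the union over e = (u,v) ∈ Eneg ∪ Epos
    -- of {e} ∪ path(u) ∪ path(v); `GVerts` is the set of vertices incident to an edge of G
    (GEdges : Set (Sym2 V))
    (hGEdges : GEdges = {s : Sym2 V | ∃ u v : V, s(u, v) ∈ Eneg ∪ Epos ∧
        (s = s(u, v) ∨ s ∈ (pathToRoot u).edges ∨ s ∈ (pathToRoot v).edges)})
    (GVerts : Set V)
    (hGVerts : GVerts = {x : V | ∃ s ∈ GEdges, x ∈ s}) :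
    (Eneg ∪ Epos).Nonempty →
      GVerts.Nonempty ∧
        ∀ a ∈ GVerts, ∀ b ∈ GVerts, (SimpleGraph.fromEdgeSet GEdges).Reachable a b := by

  intro hne
  set G := SimpleGraph.fromEdgeSet GEdges with hG
  -- a walk in F all of whose edges lie in GEdges gives reachability in G
  have walkReach : ∀ {x y : V} (p : F.Walk x y),
      (∀ s ∈ p.edges, s ∈ GEdges) → G.Reachable x y := by
    intro x y p
    induction p with
    | nil => intro _; exact Reachable.refl _
    | cons h q ih =>
      intro hsub
      refine Reachable.trans ?_ (ih fun s hs => hsub s (by simp [hs]))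
      exact ((SimpleGraph.fromEdgeSet_adj _).mpr ⟨hsub _ (by simp), h.ne⟩).reachable
  -- for an endpoint u of an edge in Eneg ∪ Epos, its path to root is inside G
  have pathInG : ∀ {u v : V}, s(u, v) ∈ Eneg ∪ Epos →
      (∀ s ∈ (pathToRoot u).edges, s ∈ GEdges) := by
    intro u v huv s hs
    rw [hGEdges]
    exact ⟨u, v, huv, Or.inr (Or.inl hs)⟩
  have rootroot : ∀ u : V, root (root u) = root u :=
    fun u => (hrootConst u (root u) (hrootReach u)).symm
  -- roots are all connected in G
  have rootsReach : ∀ u v : V, G.Reachable (root u) (root v) := by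
    have aux : ∀ {u v : V} (p : That.Walk u v), G.Reachable (root u) (root v) := by
      intro u v p
      induction p with
      | nil => exact Reachable.refl _
      | @cons u w v h q ih =>
        have hmem : s(u, w) ∈ F.edgeSet ∪ Eneg := by
          rw [← hThatEdges]; exact h
        rcases hmem with hF | hN
        · have : root u = root w := hrootConst u w (F.mem_edgeSet.mp hF).reachable
          rw [this]; exact ih
        · have hcup : s(u, w) ∈ Eneg ∪ Epos := Or.inl hN
          have r1 : G.Reachable (root u) u := (walkReach (pathToRoot u) (pathInG hcup)).symm
          have huw : G.Adj u w := (SimpleGraph.fromEdgeSet_adj _).mpr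
            ⟨by rw [hGEdges]; exact ⟨u, w, hcup, Or.inl rfl⟩, h.ne⟩
          have hcup' : s(w, u) ∈ Eneg ∪ Epos := by rwa [Sym2.eq_swap] at hcup
          have r2 : G.Reachable w (root w) := walkReach (pathToRoot w) (pathInG hcup')
          exact (r1.trans huw.reachable).trans (r2.trans ih)
    intro u v
    exact aux ((hThatTree.isConnected u v).some)
  -- every vertex of G is reachable to its root
  have vertToRoot : ∀ a ∈ GVerts, G.Reachable a (root a) := by
    intro a ha
    rw [hGVerts] at ha
    obtain ⟨s, hs, has⟩ := ha
    rw [hGEdges] at hs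
    obtain ⟨u, v, huv, hcase⟩ := hs
    have onPath : ∀ w : V, (∀ t ∈ (pathToRoot w).edges, t ∈ GEdges) →
        s ∈ (pathToRoot w).edges → G.Reachable a (root a) := by
      intro w hw hsw
      have hsup : a ∈ (pathToRoot w).support := by
        induction s using Sym2.ind with
        | _ x y =>
          rcases Sym2.mem_iff.mp has with rfl | rfl
          · exact Walk.fst_mem_support_of_mem_edges _ hsw
          · exact Walk.snd_mem_support_of_mem_edges _ hsw
      have hra : root a = root w := by
        have := hrootConst a (root w) ((pathToRoot w).dropUntil a hsup).reachable
        rw [this, rootroot]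
      rw [hra]
      exact walkReach ((pathToRoot w).dropUntil a hsup)
        fun t ht => hw t (Walk.edges_dropUntil_subset _ _ ht)
    have huv' : s(v, u) ∈ Eneg ∪ Epos := by rwa [Sym2.eq_swap] at huv
    rcases hcase with rfl | h2 | h3
    · rcases Sym2.mem_iff.mp has with rfl | rfl
      · exact walkReach (pathToRoot a) (pathInG huv)
      · exact walkReach (pathToRoot a) (pathInG huv')
    · exact onPath u (pathInG huv) h2
    · exact onPath v (pathInG huv') h3
  constructor
  · obtain ⟨e, he⟩ := hne
    revert he
    induction e using Sym2.ind with
    | _ u v =>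
      intro he
      refine ⟨u, ?_⟩
      rw [hGVerts]
      exact ⟨s(u, v), by rw [hGEdges]; exact ⟨u, v, he, Or.inl rfl⟩, by simp⟩
  · intro a ha b hb
    exact ((vertToRoot a ha).trans (rootsReach a b)).trans (vertToRoot b hb).symm
end

section
/- Under the setup, if E⁻ ∪ E⁺ is nonempty, then Ĝ is connected with vertex set V, G is connected, and |E(Ĝ)| − |V| = |E(G)| − |V(G)|; equivalently, the first Betti numbers of Ĝ and of G (number of edges minus number of vertices plus number of connected components) are equal. (Lemma 4.5 of the paper.) -/
/-!
Every vertex of `G` carries its whole path to the root of its component of `F`, so the vertex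
set of `G` is closed under passing to the parent, and it contains every root because `T̂` is
connected: walking along `T̂`, an `F`-edge keeps the root and an `E⁻`-edge lies in `G` together
with the paths from its endpoints to their roots. The same walk argument connects `G`.

For a parent-closed vertex set, `v ↦ (first edge of the path from v)` is a bijection from its
non-root vertices onto the `F`-edges it spans, so `|V| - |E(F)|` and `|V(G)| - |E(G) ∩ E(F)|`
both equal the number of roots, while the remaining edges of `Ĝ` and of `G` are the same set
`(E⁻ ∪ E⁺) \ E(F)`.
-/

open SimpleGraph Function

namespace SimpleGraph

variable {V : Type*}

theorem Walk.reachable_fromEdgeSet {G : SimpleGraph V} {E : Set (Sym2 V)} {u v : V}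
    (p : G.Walk u v) (hp : ∀ e ∈ p.edges, e ∈ E) : (fromEdgeSet E).Reachable u v :=
  ⟨p.transfer _ fun e he => by
    rw [edgeSet_fromEdgeSet]
    exact ⟨hp e he, G.not_isDiag_of_mem_edgeSet (p.edges_subset_edgeSet he)⟩⟩

structure IsRootedForest (F : SimpleGraph V) (root : V → V)
    (pathToRoot : ∀ v, F.Walk v (root v)) : Prop where
  isAcyclic : F.IsAcyclic
  root_eq_of_reachable : ∀ u v, F.Reachable u v → root u = root v
  isPath_pathToRoot : ∀ v, (pathToRoot v).IsPath

variable {F : SimpleGraph V} {root : V → V} {pathToRoot : ∀ v, F.Walk v (root v)}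

def parentEdge (pathToRoot : ∀ v, F.Walk v (root v)) (v : V) : Sym2 V :=
  s(v, (pathToRoot v).snd)

def rootPathClosure (pathToRoot : ∀ v, F.Walk v (root v)) (E : Set (Sym2 V)) :
    Set (Sym2 V) :=
  {s | ∃ u v, s(u, v) ∈ E ∧
    (s = s(u, v) ∨ s ∈ (pathToRoot u).edges ∨ s ∈ (pathToRoot v).edges)}

def edgeVerts (E : Set (Sym2 V)) : Set V := {x | ∃ s ∈ E, x ∈ s}

section rootPathClosure

variable {E : Set (Sym2 V)}

theorem subset_rootPathClosure : E ⊆ rootPathClosure pathToRoot E := by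
  intro e he
  induction e using Sym2.ind with
  | _ a b => exact ⟨a, b, he, Or.inl rfl⟩

theorem rootPathClosure_subset : rootPathClosure pathToRoot E ⊆ E ∪ F.edgeSet := by
  rintro e ⟨a, b, hab, rfl | he | he⟩
  · exact Or.inl hab
  · exact Or.inr ((pathToRoot a).edges_subset_edgeSet he)
  · exact Or.inr ((pathToRoot b).edges_subset_edgeSet he)

theorem nonempty_edgeVerts_rootPathClosure (hE : E.Nonempty) :
    (edgeVerts (rootPathClosure pathToRoot E)).Nonempty :=
  let ⟨e, he⟩ := hE
  ⟨e.out.1, e, subset_rootPathClosure he, Sym2.out_fst_mem e⟩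

end rootPathClosure

namespace IsRootedForest

theorem pathToRoot_eq (h : IsRootedForest F root pathToRoot) {v w : V} (p : F.Walk v w)
    (hp : p.IsPath) (hw : w = root v) : pathToRoot v = p.copy rfl hw :=
  congrArg Subtype.val <| (h.isAcyclic.subsingleton_path _ _).elim
    ⟨_, h.isPath_pathToRoot v⟩ ⟨p.copy rfl hw, by simpa⟩

theorem nil_pathToRoot_iff (h : IsRootedForest F root pathToRoot) {v : V} :
    (pathToRoot v).Nil ↔ root v = v := by
  refine ⟨fun hnil => hnil.eq.symm, fun hv => ?_⟩
  rw [h.pathToRoot_eq .nil .nil hv.symm]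
  simp

theorem root_snd (h : IsRootedForest F root pathToRoot) {v : V} (hv : root v ≠ v) :
    root (pathToRoot v).snd = root v :=
  (h.root_eq_of_reachable _ _
    (Walk.adj_snd (h.nil_pathToRoot_iff.not.mpr hv)).reachable).symm

theorem length_pathToRoot_snd_add_one (h : IsRootedForest F root pathToRoot) {v : V}
    (hv : root v ≠ v) : (pathToRoot (pathToRoot v).snd).length + 1 = (pathToRoot v).length := by
  have hnil : ¬ (pathToRoot v).Nil := h.nil_pathToRoot_iff.not.mpr hv
  rw [h.pathToRoot_eq _ (h.isPath_pathToRoot v).tail (h.root_snd hv).symm, Walk.length_copy,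
    Walk.length_tail_add_one hnil]

theorem parentEdge_mem_edges (h : IsRootedForest F root pathToRoot) {v : V}
    (hv : root v ≠ v) : parentEdge pathToRoot v ∈ (pathToRoot v).edges := by
  rw [parentEdge, ← (pathToRoot v).cons_tail_eq (h.nil_pathToRoot_iff.not.mpr hv)]
  simp

theorem parentEdge_mem_edgeSet (h : IsRootedForest F root pathToRoot) {v : V}
    (hv : root v ≠ v) : parentEdge pathToRoot v ∈ F.edgeSet :=
  (pathToRoot v).edges_subset_edgeSet (h.parentEdge_mem_edges hv)

theorem parentEdge_injOn (h : IsRootedForest F root pathToRoot) :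
    Set.InjOn (parentEdge pathToRoot) (fixedPoints root)ᶜ := by
  intro a ha b hb hab
  rcases Sym2.eq_iff.mp hab with ⟨rfl, -⟩ | ⟨hab, hba⟩
  · rfl
  · have hda := h.length_pathToRoot_snd_add_one ha
    have hdb := h.length_pathToRoot_snd_add_one hb
    rw [hba] at hda
    rw [← hab] at hdb
    omega

theorem edges_pathToRoot_subset (h : IsRootedForest F root pathToRoot) {u v : V}
    (hv : v ∈ (pathToRoot u).support) : (pathToRoot v).edges ⊆ (pathToRoot u).edges := by
  classical
  have hroot : root u = root v := h.root_eq_of_reachable _ _ ⟨(pathToRoot u).takeUntil v hv⟩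
  rw [h.pathToRoot_eq _ ((h.isPath_pathToRoot u).dropUntil hv) hroot, Walk.edges_copy]
  exact (pathToRoot u).edges_dropUntil_subset_edges hv

theorem exists_parentEdge_eq (h : IsRootedForest F root pathToRoot) {a b : V}
    (hab : F.Adj a b) : ∃ v, root v ≠ v ∧ parentEdge pathToRoot v = s(a, b) := by
  classical
  by_cases ha : a ∈ (pathToRoot b).support
  · -- the unique path from `b` to `a` is the edge `ba`, so it starts the path from `b`
    have hedge : (pathToRoot b).takeUntil a ha = .cons hab.symm .nil :=
      congrArg Subtype.val <| (h.isAcyclic.subsingleton_path _ _).elim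
        ⟨_, (h.isPath_pathToRoot b).takeUntil ha⟩ ⟨_, by simp [hab.ne']⟩
    have hspec := (pathToRoot b).take_spec ha
    rw [hedge, Walk.cons_append, Walk.nil_append] at hspec
    refine ⟨b, fun hb => ?_, ?_⟩
    · exact Walk.not_nil_cons (hspec ▸ h.nil_pathToRoot_iff.mpr hb)
    · rw [parentEdge, ← hspec, Walk.snd_cons, Sym2.eq_swap]
  · -- otherwise the edge `ab` followed by the path from `b` is the path from `a`
    have hpath := h.pathToRoot_eq _ ((h.isPath_pathToRoot b).cons (h := hab) ha)
      (h.root_eq_of_reachable _ _ hab.reachable).symm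
    refine ⟨a, fun ha' => ?_, ?_⟩
    · simpa [hpath] using h.nil_pathToRoot_iff.mpr ha'
    · simp [parentEdge, hpath]

theorem image_parentEdge_eq (h : IsRootedForest F root pathToRoot) {S : Set V}
    {E : Set (Sym2 V)} (hEF : E ⊆ F.edgeSet) (hES : ∀ e ∈ E, ∀ x ∈ e, x ∈ S)
    (hSE : ∀ v ∈ S, root v ≠ v → parentEdge pathToRoot v ∈ E) :
    parentEdge pathToRoot '' (S \ fixedPoints root) = E := by
  ext e
  refine ⟨?_, fun he => ?_⟩
  · rintro ⟨v, ⟨hvS, hv⟩, rfl⟩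
    exact hSE v hvS hv
  · induction e using Sym2.ind with
    | _ a b =>
      obtain ⟨v, hv, hve⟩ := h.exists_parentEdge_eq (hEF he)
      have hvS : v ∈ S := hES _ he v (hve ▸ Sym2.mem_mk_left _ _)
      exact ⟨v, ⟨hvS, hv⟩, hve⟩

theorem ncard_eq_ncard_fixedPoints_add [Finite V] (h : IsRootedForest F root pathToRoot)
    {S : Set V} {E : Set (Sym2 V)} (hroots : fixedPoints root ⊆ S) (hEF : E ⊆ F.edgeSet)
    (hES : ∀ e ∈ E, ∀ x ∈ e, x ∈ S) (hSE : ∀ v ∈ S, root v ≠ v → parentEdge pathToRoot v ∈ E) :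
    S.ncard = (fixedPoints root).ncard + E.ncard := by
  rw [← h.image_parentEdge_eq hEF hES hSE,
    (h.parentEdge_injOn.mono fun _ hv => hv.2).ncard_image,
    ← Set.ncard_sdiff_add_ncard_of_subset hroots, add_comm]

section rootPathClosure

variable {E : Set (Sym2 V)}

theorem edges_pathToRoot_subset_rootPathClosure (h : IsRootedForest F root pathToRoot) {v : V}
    (hv : v ∈ edgeVerts (rootPathClosure pathToRoot E)) :
    ∀ e ∈ (pathToRoot v).edges, e ∈ rootPathClosure pathToRoot E := by
  obtain ⟨e, ⟨a, b, hab, he⟩, hve⟩ := hv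
  have hsupport : v ∈ (pathToRoot a).support ∨ v ∈ (pathToRoot b).support := by
    rcases he with rfl | he | he
    · rcases Sym2.mem_iff.mp hve with rfl | rfl <;> simp
    · exact Or.inl (Walk.mem_support_iff_exists_mem_edges.mpr (Or.inr ⟨e, he, hve⟩))
    · exact Or.inr (Walk.mem_support_iff_exists_mem_edges.mpr (Or.inr ⟨e, he, hve⟩))
  rcases hsupport with hva | hvb
  · exact fun e he => ⟨a, b, hab, Or.inr (Or.inl (h.edges_pathToRoot_subset hva he))⟩
  · exact fun e he => ⟨a, b, hab, Or.inr (Or.inr (h.edges_pathToRoot_subset hvb he))⟩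

theorem root_mem_edgeVerts_of_mem (h : IsRootedForest F root pathToRoot) {v : V}
    (hv : v ∈ edgeVerts (rootPathClosure pathToRoot E)) :
    root v ∈ edgeVerts (rootPathClosure pathToRoot E) := by
  by_cases hvr : root v = v
  · rwa [hvr]
  obtain ⟨e, he, hre⟩ := (Walk.mem_support_iff_exists_mem_edges_of_not_nil
    (h.nil_pathToRoot_iff.not.mpr hvr)).mp (pathToRoot v).end_mem_support
  exact ⟨e, h.edges_pathToRoot_subset_rootPathClosure hv e he, hre⟩

theorem reachable_root (h : IsRootedForest F root pathToRoot) {v : V}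
    (hv : v ∈ edgeVerts (rootPathClosure pathToRoot E)) :
    (fromEdgeSet (rootPathClosure pathToRoot E)).Reachable v (root v) :=
  (pathToRoot v).reachable_fromEdgeSet (h.edges_pathToRoot_subset_rootPathClosure hv)

theorem root_mem_edgeVerts_and_reachable_of_walk (h : IsRootedForest F root pathToRoot)
    {H : SimpleGraph V} (hH : H.edgeSet ⊆ F.edgeSet ∪ E) {a b : V} (p : H.Walk a b)
    (ha : root a ∈ edgeVerts (rootPathClosure pathToRoot E)) :
    root b ∈ edgeVerts (rootPathClosure pathToRoot E) ∧
      (fromEdgeSet (rootPathClosure pathToRoot E)).Reachable (root a) (root b) := by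
  induction p with
  | nil => exact ⟨ha, .rfl⟩
  | @cons x y b hxy q ih =>
    rcases hH (H.mem_edgeSet.mpr hxy) with hF | hE
    · rw [h.root_eq_of_reachable x y (F.mem_edgeSet.mp hF).reachable] at ha ⊢
      exact ih ha
    · have hxyC : s(x, y) ∈ rootPathClosure pathToRoot E := subset_rootPathClosure hE
      have hx : x ∈ edgeVerts (rootPathClosure pathToRoot E) := ⟨_, hxyC, Sym2.mem_mk_left _ _⟩
      have hy : y ∈ edgeVerts (rootPathClosure pathToRoot E) := ⟨_, hxyC, Sym2.mem_mk_right _ _⟩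
      have hxy' : (fromEdgeSet (rootPathClosure pathToRoot E)).Adj x y :=
        (fromEdgeSet_adj _).mpr ⟨hxyC, hxy.ne⟩
      obtain ⟨hb, hyb⟩ := ih (h.root_mem_edgeVerts_of_mem hy)
      exact ⟨hb, (h.reachable_root hx).symm.trans
        (hxy'.reachable.trans ((h.reachable_root hy).trans hyb))⟩

theorem fixedPoints_subset_edgeVerts (h : IsRootedForest F root pathToRoot)
    {H : SimpleGraph V} (hHconn : H.Connected) (hH : H.edgeSet ⊆ F.edgeSet ∪ E)
    (hE : E.Nonempty) : fixedPoints root ⊆ edgeVerts (rootPathClosure pathToRoot E) := by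
  obtain ⟨x, hx⟩ := nonempty_edgeVerts_rootPathClosure (pathToRoot := pathToRoot) hE
  intro v hv
  rw [← hv.eq]
  exact (h.root_mem_edgeVerts_and_reachable_of_walk hH (hHconn.preconnected x v).some
    (h.root_mem_edgeVerts_of_mem hx)).1

theorem reachable_of_mem_edgeVerts (h : IsRootedForest F root pathToRoot) {H : SimpleGraph V}
    (hHconn : H.Connected) (hH : H.edgeSet ⊆ F.edgeSet ∪ E) {a b : V}
    (ha : a ∈ edgeVerts (rootPathClosure pathToRoot E))
    (hb : b ∈ edgeVerts (rootPathClosure pathToRoot E)) :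
    (fromEdgeSet (rootPathClosure pathToRoot E)).Reachable a b :=
  (h.reachable_root ha).trans <|
    (h.root_mem_edgeVerts_and_reachable_of_walk hH (hHconn.preconnected a b).some
      (h.root_mem_edgeVerts_of_mem ha)).2.trans (h.reachable_root hb).symm

theorem ncard_union_sub_card_eq [Finite V] (h : IsRootedForest F root pathToRoot)
    (hroots : fixedPoints root ⊆ edgeVerts (rootPathClosure pathToRoot E)) :
    ((F.edgeSet ∪ E).ncard : ℤ) - Nat.card V =
      ((rootPathClosure pathToRoot E).ncard : ℤ) -
        (edgeVerts (rootPathClosure pathToRoot E)).ncard := by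
  set C := rootPathClosure pathToRoot E
  have hV : Nat.card V = (fixedPoints root).ncard + F.edgeSet.ncard := by
    rw [← Set.ncard_univ]
    exact h.ncard_eq_ncard_fixedPoints_add (Set.subset_univ _) subset_rfl
      (fun _ _ _ _ => trivial) fun _ _ hv => h.parentEdge_mem_edgeSet hv
  have hG : (edgeVerts C).ncard = (fixedPoints root).ncard + (C ∩ F.edgeSet).ncard :=
    h.ncard_eq_ncard_fixedPoints_add hroots Set.inter_subset_right
      (fun e he _ hx => ⟨e, he.1, hx⟩) fun _ hv hvr =>
        ⟨h.edges_pathToRoot_subset_rootPathClosure hv _ (h.parentEdge_mem_edges hvr),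
          h.parentEdge_mem_edgeSet hvr⟩
  have hCF : C \ F.edgeSet = E \ F.edgeSet := by
    refine subset_antisymm ?_ (Set.sdiff_subset_sdiff_left subset_rootPathClosure)
    rintro e ⟨heC, heF⟩
    exact ⟨(rootPathClosure_subset heC).resolve_right heF, heF⟩
  have hC := Set.ncard_inter_add_ncard_sdiff_eq_ncard C F.edgeSet
  have hFE : (F.edgeSet ∪ E).ncard = F.edgeSet.ncard + (E \ F.edgeSet).ncard := by
    rw [← Set.union_sdiff_self, Set.ncard_union_eq Set.disjoint_sdiff_right]
  rw [hCF] at hC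
  omega

end rootPathClosure

end IsRootedForest
end SimpleGraph

theorem lemma_4_5_betti_numbers_general
    {V : Type*} [Fintype V]
    -- `F` is a spanning forest of `K` (an acyclic subgraph on all of `V`)
    (F : SimpleGraph V) (hFacyclic : F.IsAcyclic)
    -- a choice of root in each connected component of `F`
    (root : V → V)
    (hrootConst : ∀ u v : V, F.Reachable u v → root u = root v)
    -- `pathToRoot v` is the unique path in `F` from `v` to the root of its component
    (pathToRoot : (v : V) → F.Walk v (root v))
    (hpathToRoot : ∀ v : V, (pathToRoot v).IsPath)
    -- `Eneg` and `Epos` are disjoint sets of edges of `K`, disjoint from the edges of `F`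
    (Eneg Epos : Set (Sym2 V))
    -- `That` (= T̂) is the spanning tree with edge set E(F) ∪ Eneg
    (That : SimpleGraph V)
    (hThatEdges : That.edgeSet = F.edgeSet ∪ Eneg)
    (hThatTree : That.IsTree)
    -- `GEdges` is the edge set of the output graph G: the union over e = (u,v) ∈ Eneg ∪ Epos
    -- of {e} ∪ path(u) ∪ path(v); `GVerts` is the set of vertices incident to an edge of G
    (GEdges : Set (Sym2 V))
    (hGEdges : GEdges = {s : Sym2 V | ∃ u v : V, s(u, v) ∈ Eneg ∪ Epos ∧
        (s = s(u, v) ∨ s ∈ (pathToRoot u).edges ∨ s ∈ (pathToRoot v).edges)})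
    (GVerts : Set V)
    (hGVerts : GVerts = {x : V | ∃ s ∈ GEdges, x ∈ s}) :
    (Eneg ∪ Epos).Nonempty →
      (SimpleGraph.fromEdgeSet (F.edgeSet ∪ Eneg ∪ Epos)).Connected ∧
      (GVerts.Nonempty ∧
        ∀ a ∈ GVerts, ∀ b ∈ GVerts, (SimpleGraph.fromEdgeSet GEdges).Reachable a b) ∧
      ((F.edgeSet ∪ Eneg ∪ Epos).ncard : ℤ) - (Fintype.card V : ℤ)
        = (GEdges.ncard : ℤ) - (GVerts.ncard : ℤ) := by
  intro hE
  obtain rfl : GEdges = rootPathClosure pathToRoot (Eneg ∪ Epos) := hGEdges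
  obtain rfl : GVerts = edgeVerts (rootPathClosure pathToRoot (Eneg ∪ Epos)) := hGVerts
  have hF : IsRootedForest F root pathToRoot := ⟨hFacyclic, hrootConst, hpathToRoot⟩
  have hThatConn : That.Connected := hThatTree.connected
  have hThat : That.edgeSet ⊆ F.edgeSet ∪ (Eneg ∪ Epos) := by
    rw [hThatEdges]
    exact Set.union_subset_union_right _ Set.subset_union_left
  refine ⟨hThatConn.mono ?_, ⟨nonempty_edgeVerts_rootPathClosure hE,
    fun a ha b hb => hF.reachable_of_mem_edgeVerts hThatConn hThat ha hb⟩, ?_⟩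
  · rw [← fromEdgeSet_edgeSet That, hThatEdges]
    exact fromEdgeSet_mono Set.subset_union_left
  · rw [Set.union_assoc, ← Nat.card_eq_fintype_card]
    exact hF.ncard_union_sub_card_eq (hF.fixedPoints_subset_edgeVerts hThatConn hThat hE)

/-- Lemma 4.5: if E⁻ ∪ E⁺ is nonempty, then Ĝ is connected with vertex set V, G is connected, and |E(Ĝ)| − |V| = |E(G)| − |V(G)|, i.e. the first Betti numbers of Ĝ and of G agree. -/
theorem lemma_4_5_betti_numbers
    {V : Type*} [Fintype V] [DecidableEq V]
    -- `K` is a finite connected simple graph on vertex set `V`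
    (K : SimpleGraph V) (hK : K.Connected)
    -- `F` is a spanning forest of `K` (an acyclic subgraph on all of `V`)
    (F : SimpleGraph V) (hFK : F ≤ K) (hFacyclic : F.IsAcyclic)
    -- a choice of root in each connected component of `F`
    (root : V → V)
    (hrootReach : ∀ v : V, F.Reachable v (root v))
    (hrootConst : ∀ u v : V, F.Reachable u v → root u = root v)
    -- `pathToRoot v` is the unique path in `F` from `v` to the root of its component
    (pathToRoot : (v : V) → F.Walk v (root v))
    (hpathToRoot : ∀ v : V, (pathToRoot v).IsPath)
    -- `Eneg` and `Epos` are disjoint sets of edges of `K`, disjoint from the edges of `F`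
    (Eneg Epos : Set (Sym2 V))
    (hEnegK : Eneg ⊆ K.edgeSet) (hEposK : Epos ⊆ K.edgeSet)
    (hdisjNP : Disjoint Eneg Epos)
    (hdisjNF : Disjoint Eneg F.edgeSet) (hdisjPF : Disjoint Epos F.edgeSet)
    -- `That` (= T̂) is the spanning tree with edge set E(F) ∪ Eneg
    (That : SimpleGraph V)
    (hThatEdges : That.edgeSet = F.edgeSet ∪ Eneg)
    (hThatTree : That.IsTree)
    -- `GEdges` is the edge set of the output graph G: the union over e = (u,v) ∈ Eneg ∪ Epos
    -- of {e} ∪ path(u) ∪ path(v); `GVerts` is the set of vertices incident to an edge of G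
    (GEdges : Set (Sym2 V))
    (hGEdges : GEdges = {s : Sym2 V | ∃ u v : V, s(u, v) ∈ Eneg ∪ Epos ∧
        (s = s(u, v) ∨ s ∈ (pathToRoot u).edges ∨ s ∈ (pathToRoot v).edges)})
    (GVerts : Set V)
    (hGVerts : GVerts = {x : V | ∃ s ∈ GEdges, x ∈ s}) :
    (Eneg ∪ Epos).Nonempty →
      (SimpleGraph.fromEdgeSet (F.edgeSet ∪ Eneg ∪ Epos)).Connected ∧
      (GVerts.Nonempty ∧
        ∀ a ∈ GVerts, ∀ b ∈ GVerts, (SimpleGraph.fromEdgeSet GEdges).Reachable a b) ∧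
      ((F.edgeSet ∪ Eneg ∪ Epos).ncard : ℤ) - (Fintype.card V : ℤ)
        = (GEdges.ncard : ℤ) - (GVerts.ncard : ℤ) :=
  lemma_4_5_betti_numbers_general F hFacyclic root hrootConst pathToRoot hpathToRoot Eneg Epos That
    hThatEdges hThatTree GEdges hGEdges GVerts hGVerts
end

section
/- Under the setup, assume E⁻ ∪ E⁺ is nonempty, and let H be the subgraph of Ĝ whose edge set is E(Ĝ) \ E(G) and whose vertices are the endpoints of those edges. Then every connected component C of H is acyclic, and the vertex set of C contains exactly one vertex belonging to V(G). (The combinatorial content of Lemma 4.2 of the paper: Ĝ_δ deformation retracts onto G_δ by contracting each such tree component to its unique attachment vertex.) -/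
open SimpleGraph

/-- Lemma 4.2 (combinatorial content): if E⁻ ∪ E⁺ is nonempty, and H is the subgraph of Ĝ with edge set E(Ĝ) \\ E(G) and vertices the endpoints of those edges, then every connected component of H is acyclic and contains exactly one vertex of V(G). -/
theorem lemma_4_2_retract_components
    {V : Type*} [Fintype V] [DecidableEq V]
    -- `K` is a finite connected simple graph on vertex set `V`
    (K : SimpleGraph V) (hK : K.Connected)
    -- `F` is a spanning forest of `K` (an acyclic subgraph on all of `V`)
    (F : SimpleGraph V) (hFK : F ≤ K) (hFacyclic : F.IsAcyclic)
    -- a choice of root in each connected component of `F`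
    (root : V → V)
    (hrootReach : ∀ v : V, F.Reachable v (root v))
    (hrootConst : ∀ u v : V, F.Reachable u v → root u = root v)
    -- `pathToRoot v` is the unique path in `F` from `v` to the root of its component
    (pathToRoot : (v : V) → F.Walk v (root v))
    (hpathToRoot : ∀ v : V, (pathToRoot v).IsPath)
    -- `Eneg` and `Epos` are disjoint sets of edges of `K`, disjoint from the edges of `F`
    (Eneg Epos : Set (Sym2 V))
    (hEnegK : Eneg ⊆ K.edgeSet) (hEposK : Epos ⊆ K.edgeSet)
    (hdisjNP : Disjoint Eneg Epos)
    (hdisjNF : Disjoint Eneg F.edgeSet) (hdisjPF : Disjoint Epos F.edgeSet)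
    -- `That` (= T̂) is the spanning tree with edge set E(F) ∪ Eneg
    (That : SimpleGraph V)
    (hThatEdges : That.edgeSet = F.edgeSet ∪ Eneg)
    (hThatTree : That.IsTree)
    -- `GEdges` is the edge set of the output graph G: the union over e = (u,v) ∈ Eneg ∪ Epos
    -- of {e} ∪ path(u) ∪ path(v); `GVerts` is the set of vertices incident to an edge of G
    (GEdges : Set (Sym2 V))
    (hGEdges : GEdges = {s : Sym2 V | ∃ u v : V, s(u, v) ∈ Eneg ∪ Epos ∧
        (s = s(u, v) ∨ s ∈ (pathToRoot u).edges ∨ s ∈ (pathToRoot v).edges)})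
    (GVerts : Set V)
    (hGVerts : GVerts = {x : V | ∃ s ∈ GEdges, x ∈ s}) :
    (Eneg ∪ Epos).Nonempty →
      (SimpleGraph.fromEdgeSet ((F.edgeSet ∪ Eneg ∪ Epos) \ GEdges)).IsAcyclic ∧
      ∀ x ∈ {y : V | ∃ s ∈ (F.edgeSet ∪ Eneg ∪ Epos) \ GEdges, y ∈ s},
        ∃! w : V, w ∈ GVerts ∧
          (SimpleGraph.fromEdgeSet ((F.edgeSet ∪ Eneg ∪ Epos) \ GEdges)).Reachable x w := by
  intro hne
  set Hset : Set (Sym2 V) := (F.edgeSet ∪ Eneg ∪ Epos) \ GEdges with hHsetdef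
  set H : SimpleGraph V := SimpleGraph.fromEdgeSet Hset with hHdef
  -- every "big" edge is in GEdges
  have hbigG : ∀ s ∈ Eneg ∪ Epos, s ∈ GEdges := by
    intro s hs
    induction s using Sym2.ind with
    | _ u v =>
      rw [hGEdges]
      exact ⟨u, v, hs, Or.inl rfl⟩
  -- membership in an edge of GEdges gives membership in GVerts
  have hmemG : ∀ s ∈ GEdges, ∀ y ∈ s, y ∈ GVerts := by
    intro s hs y hy
    rw [hGVerts]
    exact ⟨s, hs, hy⟩
  have hHsetF : Hset ⊆ F.edgeSet := by
    rintro e ⟨he, hnG⟩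
    rcases he with (hF | hN) | hP
    · exact hF
    · exact absurd (hbigG e (Or.inl hN)) hnG
    · exact absurd (hbigG e (Or.inr hP)) hnG
  have hHF : H ≤ F :=
    le_trans (SimpleGraph.fromEdgeSet_mono hHsetF) (le_of_eq (SimpleGraph.fromEdgeSet_edgeSet F))
  have hHacyclic : H.IsAcyclic := fun a p hp =>
    hFacyclic (p.mapLe hHF) ((SimpleGraph.Walk.mapLe_isCycle hHF).mpr hp)
  -- suffix property of paths to the root
  have hsuffix : ∀ (u y : V) (hy : y ∈ (pathToRoot u).support),
      (pathToRoot y).edges ⊆ (pathToRoot u).edges := by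
    intro u y hy
    have hreach : F.Reachable y (root u) := ⟨(pathToRoot u).dropUntil y hy⟩
    have hroot : root y = root u := by
      have h1 := hrootConst y (root u) hreach
      have h2 := hrootConst u (root u) (hrootReach u)
      rw [h1, ← h2]
    have hdrop : (((pathToRoot u).dropUntil y hy).copy rfl hroot.symm).IsPath := by
      simpa using (hpathToRoot u).dropUntil hy
    have heq : pathToRoot y = ((pathToRoot u).dropUntil y hy).copy rfl hroot.symm := by
      have := hFacyclic.path_unique ⟨pathToRoot y, hpathToRoot y⟩ ⟨_, hdrop⟩
      exact congrArg Subtype.val this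
    rw [heq]
    intro e he
    rw [SimpleGraph.Walk.edges_copy] at he
    exact (pathToRoot u).edges_dropUntil_subset hy he
  -- all edges of pathToRoot of a vertex of GVerts lie in GEdges
  have hA : ∀ y, y ∈ GVerts → ∀ e ∈ (pathToRoot y).edges, e ∈ GEdges := by
    intro y hy
    rw [hGVerts] at hy
    obtain ⟨s, hsG, hys⟩ := hy
    have hsG' := hsG
    rw [hGEdges] at hsG'
    obtain ⟨u, v, hbig, hcase⟩ := hsG'
    have hpathG : ∀ w : V, ((pathToRoot w).edges ⊆ (pathToRoot u).edges ∨
        (pathToRoot w).edges ⊆ (pathToRoot v).edges) → ∀ e ∈ (pathToRoot w).edges, e ∈ GEdges := by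
      intro w hw e he
      rcases hw with hw | hw
      · rw [hGEdges]; exact ⟨u, v, hbig, Or.inr (Or.inl (hw he))⟩
      · rw [hGEdges]; exact ⟨u, v, hbig, Or.inr (Or.inr (hw he))⟩
    rcases hcase with rfl | hmem | hmem
    · rcases Sym2.mem_iff.mp hys with rfl | rfl
      · exact hpathG y (Or.inl (hsuffix y y (pathToRoot y).start_mem_support))
      · exact hpathG y (Or.inr (hsuffix y y (pathToRoot y).start_mem_support))
    · obtain ⟨z, rfl⟩ := Sym2.mem_iff_exists.mp hys
      have hsup : y ∈ (pathToRoot u).support :=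
        (pathToRoot u).fst_mem_support_of_mem_edges hmem
      exact hpathG y (Or.inl (hsuffix u y hsup))
    · obtain ⟨z, rfl⟩ := Sym2.mem_iff_exists.mp hys
      have hsup : y ∈ (pathToRoot v).support :=
        (pathToRoot v).fst_mem_support_of_mem_edges hmem
      exact hpathG y (Or.inr (hsuffix v y hsup))
  -- the endpoint of a nontrivial walk lies on one of its edges
  have hlast : ∀ (a b : V) (p : F.Walk a b), a = b ∨ ∃ e ∈ p.edges, b ∈ e := by
    intro a b p
    induction p with
    | nil => exact Or.inl rfl
    | cons h q ih =>
      rename_i c d f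
      right
      rcases ih with rfl | ⟨e, he, hbe⟩
      · exact ⟨s(c, d), by simp, Sym2.mem_mk_right _ _⟩
      · exact ⟨e, by simp [he], hbe⟩
  have hB : ∀ y, y ∈ GVerts → root y ∈ GVerts := by
    intro y hy
    rcases hlast y (root y) (pathToRoot y) with h | ⟨e, he, hre⟩
    · rwa [← h]
    · exact hmemG e (hA y hy e he) _ hre
  -- some vertex of GVerts
  obtain ⟨u0, v0, he0⟩ : ∃ u v : V, s(u, v) ∈ Eneg ∪ Epos := by
    obtain ⟨e0, he0⟩ := hne
    induction e0 using Sym2.ind with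
    | _ a b => exact ⟨a, b, he0⟩
  have hu0 : u0 ∈ GVerts := hmemG _ (hbigG _ he0) u0 (Sym2.mem_mk_left _ _)
  -- every root lies in GVerts (using connectivity of That)
  have hrootAll : ∀ v : V, root v ∈ GVerts := by
    have key : ∀ (a b : V) (q : That.Walk a b), root b ∈ GVerts → root a ∈ GVerts := by
      intro a b q
      induction q with
      | nil => exact id
      | cons h q ih =>
        rename_i x y z
        intro hb
        have hedge : s(x, y) ∈ F.edgeSet ∪ Eneg := by
          rw [← hThatEdges]; exact That.mem_edgeSet.mpr h
        rcases hedge with hF | hN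
        · have : root x = root y := hrootConst x y (F.mem_edgeSet.mp hF).reachable
          rw [this]; exact ih hb
        · exact hB x (hmemG _ (hbigG _ (Or.inl hN)) x (Sym2.mem_mk_left _ _))
    intro v
    obtain ⟨p⟩ := hThatTree.isConnected.preconnected v u0
    exact key v u0 p (hB u0 hu0)
  -- existence: walking down an F-walk towards a vertex of GVerts stays H-reachable
  have hE : ∀ (a b : V) (p : F.Walk a b), b ∈ GVerts →
      ∃ w, w ∈ GVerts ∧ H.Reachable a w := by
    intro a b p
    induction p with
    | nil => exact fun hb => ⟨_, hb, SimpleGraph.Reachable.refl _⟩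
    | cons h q ih =>
      rename_i x y z
      intro hb
      by_cases hx : x ∈ GVerts
      · exact ⟨x, hx, SimpleGraph.Reachable.refl _⟩
      · have hedge : s(x, y) ∈ Hset := by
          refine ⟨Or.inl (Or.inl (F.mem_edgeSet.mpr h)), fun hG => ?_⟩
          exact hx (hmemG _ hG x (Sym2.mem_mk_left _ _))
        have hadj : H.Adj x y := (SimpleGraph.fromEdgeSet_adj _).mpr ⟨hedge, h.ne⟩
        obtain ⟨w, hw, hr⟩ := ih hb
        exact ⟨w, hw, hadj.reachable.trans hr⟩
  -- uniqueness
  have hU : ∀ w1 w2, w1 ∈ GVerts → w2 ∈ GVerts → H.Reachable w1 w2 → w1 = w2 := by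
    intro w1 w2 h1 h2 hr
    by_contra hne12
    obtain ⟨p0⟩ := hr
    have hq0 : ((p0.toPath : H.Walk w1 w2)).IsPath := p0.toPath.2
    have hq0F : ∀ e ∈ (p0.toPath : H.Walk w1 w2).edges, e ∈ F.edgeSet := by
      intro e he
      have := (p0.toPath : H.Walk w1 w2).edges_subset_edgeSet he
      rw [hHdef, SimpleGraph.edgeSet_fromEdgeSet] at this
      exact hHsetF this.1
    have hq0nG : ∀ e ∈ (p0.toPath : H.Walk w1 w2).edges, e ∉ GEdges := by
      intro e he
      have := (p0.toPath : H.Walk w1 w2).edges_subset_edgeSet he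
      rw [hHdef, SimpleGraph.edgeSet_fromEdgeSet] at this
      exact this.1.2
    have hp'path : ((p0.toPath : H.Walk w1 w2).transfer F hq0F).IsPath :=
      hq0.transfer hq0F
    have hroot12 : root w1 = root w2 :=
      hrootConst w1 w2 ⟨(p0.toPath : H.Walk w1 w2).transfer F hq0F⟩
    -- the path through G
    have hq : ∀ e ∈ ((pathToRoot w1).append
        ((pathToRoot w2).reverse.copy hroot12.symm rfl)).edges, e ∈ GEdges := by
      intro e he
      rw [SimpleGraph.Walk.edges_append] at he
      rcases List.mem_append.mp he with h | h
      · exact hA w1 h1 e h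
      · rw [SimpleGraph.Walk.edges_copy, SimpleGraph.Walk.edges_reverse] at h
        exact hA w2 h2 e (List.mem_reverse.mp h)
    have hqp : (((pathToRoot w1).append
        ((pathToRoot w2).reverse.copy hroot12.symm rfl)).toPath : F.Walk w1 w2)
        = (p0.toPath : H.Walk w1 w2).transfer F hq0F := by
      have := hFacyclic.path_unique
        ((pathToRoot w1).append ((pathToRoot w2).reverse.copy hroot12.symm rfl)).toPath
        ⟨_, hp'path⟩
      exact congrArg Subtype.val this
    -- the transferred path has an edge
    have hnonnil : ((p0.toPath : H.Walk w1 w2).transfer F hq0F).edges ≠ [] := by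
      generalize ((p0.toPath : H.Walk w1 w2).transfer F hq0F) = p'
      cases p' with
      | nil => exact absurd rfl hne12
      | cons h q => simp
    obtain ⟨e, he⟩ := List.exists_mem_of_ne_nil _ hnonnil
    have heG : e ∈ GEdges := by
      rw [← hqp] at he
      exact hq e (SimpleGraph.Walk.edges_toPath_subset _ he)
    have henG : e ∉ GEdges := by
      rw [SimpleGraph.Walk.edges_transfer] at he
      exact hq0nG e he
    exact henG heG
  refine ⟨hHacyclic, ?_⟩
  intro x _
  obtain ⟨w, hw, hr⟩ := hE x (root x) (pathToRoot x) (hrootAll x)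
  refine ⟨w, ⟨hw, hr⟩, ?_⟩
  rintro w' ⟨hw', hr'⟩
  exact hU w' w hw' hw (hr'.symm.trans hr)
end

section
/- Under the setup, if E⁻ ∪ E⁺ is nonempty, then G is connected and |E(G)| − |V(G)| + 1 = |E⁺|; that is, the first Betti number of the output graph G equals the number of edges in E⁺. (The abstract graph-theoretic form of part (ii) of Theorem 3.5: the first Betti number of G_δ equals the number of points of the persistence diagram with persistence greater than δ.) -/
open SimpleGraph

/-- Abstract form of Theorem 3.5 (ii): if E⁻ ∪ E⁺ is nonempty, then G is connected and its first Betti number |E(G)| − |V(G)| + 1 equals the number of edges in E⁺. -/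
theorem theorem_3_5_ii_betti_of_G
    {V : Type*} [Fintype V] [DecidableEq V]
    -- `K` is a finite connected simple graph on vertex set `V`
    (K : SimpleGraph V) (hK : K.Connected)
    -- `F` is a spanning forest of `K` (an acyclic subgraph on all of `V`)
    (F : SimpleGraph V) (hFK : F ≤ K) (hFacyclic : F.IsAcyclic)
    -- a choice of root in each connected component of `F`
    (root : V → V)
    (hrootReach : ∀ v : V, F.Reachable v (root v))
    (hrootConst : ∀ u v : V, F.Reachable u v → root u = root v)
    -- `pathToRoot v` is the unique path in `F` from `v` to the root of its component
    (pathToRoot : (v : V) → F.Walk v (root v))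
    (hpathToRoot : ∀ v : V, (pathToRoot v).IsPath)
    -- `Eneg` and `Epos` are disjoint sets of edges of `K`, disjoint from the edges of `F`
    (Eneg Epos : Set (Sym2 V))
    (hEnegK : Eneg ⊆ K.edgeSet) (hEposK : Epos ⊆ K.edgeSet)
    (hdisjNP : Disjoint Eneg Epos)
    (hdisjNF : Disjoint Eneg F.edgeSet) (hdisjPF : Disjoint Epos F.edgeSet)
    -- `That` (= T̂) is the spanning tree with edge set E(F) ∪ Eneg
    (That : SimpleGraph V)
    (hThatEdges : That.edgeSet = F.edgeSet ∪ Eneg)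
    (hThatTree : That.IsTree)
    -- `GEdges` is the edge set of the output graph G: the union over e = (u,v) ∈ Eneg ∪ Epos
    -- of {e} ∪ path(u) ∪ path(v); `GVerts` is the set of vertices incident to an edge of G
    (GEdges : Set (Sym2 V))
    (hGEdges : GEdges = {s : Sym2 V | ∃ u v : V, s(u, v) ∈ Eneg ∪ Epos ∧
        (s = s(u, v) ∨ s ∈ (pathToRoot u).edges ∨ s ∈ (pathToRoot v).edges)})
    (GVerts : Set V)
    (hGVerts : GVerts = {x : V | ∃ s ∈ GEdges, x ∈ s}) :
    (Eneg ∪ Epos).Nonempty →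
      (GVerts.Nonempty ∧
        ∀ a ∈ GVerts, ∀ b ∈ GVerts, (SimpleGraph.fromEdgeSet GEdges).Reachable a b) ∧
      (GEdges.ncard : ℤ) - (GVerts.ncard : ℤ) + 1 = (Epos.ncard : ℤ) := by
  classical
  intro hne
  set H : SimpleGraph V := SimpleGraph.fromEdgeSet (GEdges \ Epos) with hHdef
  -- every edge of G is an edge of K
  have hGK : GEdges ⊆ K.edgeSet := by
    intro s hs
    rw [hGEdges] at hs
    obtain ⟨u, v, he, hc⟩ := hs
    rcases hc with rfl | h | h
    · rcases he with he | he
      · exact hEnegK he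
      · exact hEposK he
    · exact edgeSet_mono hFK ((pathToRoot u).edges_subset_edgeSet h)
    · exact edgeSet_mono hFK ((pathToRoot v).edges_subset_edgeSet h)
  have hHedgeSet : H.edgeSet = GEdges \ Epos := by
    rw [hHdef, edgeSet_fromEdgeSet]
    ext e
    simp only [Set.mem_diff, Set.mem_setOf_eq]
    refine ⟨fun h => ⟨h.1.1, h.1.2⟩, fun h => ⟨h, ?_⟩⟩
    exact K.not_isDiag_of_mem_edgeSet (hGK h.1)
  -- edges occurring in Eneg ∪ Epos contribute themselves and their root paths to GEdges
  have hEsubG : ∀ {a b : V}, s(a, b) ∈ Eneg ∪ Epos →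
      s(a, b) ∈ GEdges ∧ (∀ e ∈ (pathToRoot a).edges, e ∈ GEdges) ∧
      (∀ e ∈ (pathToRoot b).edges, e ∈ GEdges) := by
    intro a b he
    refine ⟨by rw [hGEdges]; exact ⟨a, b, he, Or.inl rfl⟩, ?_, ?_⟩
    · intro e hee; rw [hGEdges]; exact ⟨a, b, he, Or.inr (Or.inl hee)⟩
    · intro e hee; rw [hGEdges]; exact ⟨a, b, he, Or.inr (Or.inr hee)⟩
  -- any vertex on a path contained in G can reach the corresponding root within H
  have haux : ∀ (a : V), (∀ e ∈ (pathToRoot a).edges, e ∈ GEdges) →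
      ∀ x ∈ (pathToRoot a).support, H.Reachable x (root a) := by
    intro a hsub x hx
    refine ((((pathToRoot a).dropUntil x hx).transfer H ?_).reachable)
    intro e hee
    have heF : e ∈ F.edgeSet := ((pathToRoot a).dropUntil x hx).edges_subset_edgeSet hee
    have heG : e ∈ GEdges := hsub e ((pathToRoot a).edges_dropUntil_subset hx hee)
    rw [hHedgeSet]
    exact ⟨heG, Set.disjoint_right.mp hdisjPF heF⟩
  -- all roots are mutually reachable in H
  have hroots : ∀ a b : V, H.Reachable (root a) (root b) := by
    intro a b
    obtain ⟨w⟩ := hThatTree.isConnected.preconnected a b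
    induction w with
    | nil => exact Reachable.refl _
    | @cons a c b h p ih =>
      have hmem : s(a, c) ∈ F.edgeSet ∪ Eneg := by
        rw [← hThatEdges]; exact That.mem_edgeSet.mpr h
      rcases hmem with hF | hN
      · rw [hrootConst a c (F.mem_edgeSet.mp hF).reachable]
        exact ih
      · have hg := hEsubG (Or.inl hN)
        have r1 : H.Reachable a (root a) := haux a hg.2.1 a (pathToRoot a).start_mem_support
        have r2 : H.Reachable c (root c) := haux c hg.2.2 c (pathToRoot c).start_mem_support
        have hadj : H.Adj a c := by
          rw [hHdef, fromEdgeSet_adj]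
          exact ⟨⟨hg.1, Set.disjoint_left.mp hdisjNP hN⟩, h.ne⟩
        exact ((r1.symm.trans hadj.reachable).trans r2).trans ih
  -- every vertex of G reaches some root within H
  have htoRoot : ∀ x ∈ GVerts, ∃ y, H.Reachable x (root y) := by
    intro x hx
    rw [hGVerts] at hx
    obtain ⟨s, hsG, hxs⟩ := hx
    have hs' := hsG
    rw [hGEdges] at hs'
    obtain ⟨u, v, he, hc⟩ := hs'
    have hg := hEsubG he
    rcases hc with rfl | h | h
    · rcases Sym2.mem_iff.mp hxs with rfl | rfl
      · exact ⟨x, haux x hg.2.1 x (pathToRoot x).start_mem_support⟩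
      · exact ⟨x, haux x hg.2.2 x (pathToRoot x).start_mem_support⟩
    · induction s using Sym2.ind with
      | _ p q =>
        rcases Sym2.mem_iff.mp hxs with rfl | rfl
        · exact ⟨u, haux u hg.2.1 x ((pathToRoot u).fst_mem_support_of_mem_edges h)⟩
        · exact ⟨u, haux u hg.2.1 x ((pathToRoot u).snd_mem_support_of_mem_edges h)⟩
    · induction s using Sym2.ind with
      | _ p q =>
        rcases Sym2.mem_iff.mp hxs with rfl | rfl
        · exact ⟨v, haux v hg.2.2 x ((pathToRoot v).fst_mem_support_of_mem_edges h)⟩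
        · exact ⟨v, haux v hg.2.2 x ((pathToRoot v).snd_mem_support_of_mem_edges h)⟩
  have hHreach : ∀ a ∈ GVerts, ∀ b ∈ GVerts, H.Reachable a b := by
    intro a ha b hb
    obtain ⟨y1, r1⟩ := htoRoot a ha
    obtain ⟨y2, r2⟩ := htoRoot b hb
    exact (r1.trans (hroots y1 y2)).trans r2.symm
  -- GVerts is nonempty
  have hvne : GVerts.Nonempty := by
    obtain ⟨s, hs⟩ := hne
    induction s using Sym2.ind with
    | _ u v =>
      exact ⟨u, by rw [hGVerts]; exact ⟨s(u, v), (hEsubG hs).1, Sym2.mem_mk_left u v⟩⟩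
  have hHle : H ≤ SimpleGraph.fromEdgeSet GEdges := fromEdgeSet_mono Set.diff_subset
  refine ⟨⟨hvne, fun a ha b hb => (hHreach a ha b hb).mono hHle⟩, ?_⟩
  -- counting part
  have hHleThat : H ≤ That := by
    rw [← edgeSet_subset_edgeSet, hHedgeSet, hThatEdges]
    intro e he
    obtain ⟨heG, heP⟩ := he
    rw [hGEdges] at heG
    obtain ⟨u, v, hmem, hc⟩ := heG
    rcases hc with rfl | h | h
    · rcases hmem with hN | hP
      · exact Or.inr hN
      · exact absurd hP heP
    · exact Or.inl ((pathToRoot u).edges_subset_edgeSet h)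
    · exact Or.inl ((pathToRoot v).edges_subset_edgeSet h)
  have hHacyc : H.IsAcyclic := by
    intro v c hc
    exact hThatTree.IsAcyclic (c.mapLe hHleThat) (Walk.IsCycle.mapLe hHleThat hc)
  -- the graph induced on GVerts
  set H' : SimpleGraph ↥GVerts := H.comap (Subtype.val) with hH'def
  have hendpts : ∀ {x y : V}, H.Adj x y → x ∈ GVerts := by
    intro x y hxy
    have he : s(x, y) ∈ GEdges := ((hHedgeSet ▸ H.mem_edgeSet.mpr hxy) : s(x,y) ∈ GEdges \ Epos).1
    rw [hGVerts]
    exact ⟨s(x, y), he, Sym2.mem_mk_left x y⟩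
  have hcomapReach : ∀ {a b : V} (_ : H.Walk a b) (ha : a ∈ GVerts) (hb : b ∈ GVerts),
      H'.Reachable ⟨a, ha⟩ ⟨b, hb⟩ := by
    intro a b w
    induction w with
    | nil => intro ha hb; exact Reachable.refl _
    | @cons a c b h p ih =>
      intro ha hb
      have hc : c ∈ GVerts := hendpts h.symm
      have hadj : H'.Adj ⟨a, ha⟩ ⟨c, hc⟩ := h
      exact hadj.reachable.trans (ih hc hb)
  haveI : Nonempty ↥GVerts := hvne.to_subtype
  have hH'conn : H'.Connected := by
    refine ⟨fun a b => ?_⟩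
    obtain ⟨w⟩ := hHreach a.1 a.2 b.1 b.2
    exact hcomapReach w a.2 b.2
  have hH'acyc : H'.IsAcyclic := by
    intro v c hc
    have hinj : Function.Injective (SimpleGraph.Hom.comap (Subtype.val : GVerts → V) H) :=
      Subtype.val_injective
    exact hHacyc _ (hc.map hinj)
  have hH'tree : H'.IsTree := ⟨hH'conn, hH'acyc⟩
  haveI : Fintype ↥GVerts := Fintype.ofFinite _
  haveI : Fintype H'.edgeSet := Fintype.ofFinite _
  have hcard1 : H'.edgeFinset.card + 1 = Fintype.card ↥GVerts := hH'tree.card_edgeFinset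
  -- edge sets correspond under the inclusion
  have himg : Sym2.map (Subtype.val : GVerts → V) '' H'.edgeSet = GEdges \ Epos := by
    rw [← hHedgeSet]
    ext e
    constructor
    · rintro ⟨s, hs, hse⟩
      induction s using Sym2.ind with
      | _ a b =>
        rw [Sym2.map_pair_eq] at hse
        subst hse
        exact H.mem_edgeSet.mpr (H'.mem_edgeSet.mp hs)
    · intro he
      induction e using Sym2.ind with
      | _ x y =>
        have hadj : H.Adj x y := H.mem_edgeSet.mp he
        have hx : x ∈ GVerts := hendpts hadj
        have hy : y ∈ GVerts := hendpts hadj.symm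
        refine ⟨s(⟨x, hx⟩, ⟨y, hy⟩), H'.mem_edgeSet.mpr hadj, ?_⟩
        rw [Sym2.map_pair_eq]
  have hinj2 : Function.Injective (Sym2.map (Subtype.val : GVerts → V)) :=
    Sym2.map.injective Subtype.val_injective
  have hcnt : (GEdges \ Epos).ncard = H'.edgeSet.ncard := by
    rw [← himg, Set.ncard_image_of_injective _ hinj2]
  have hEposSub : Epos ⊆ GEdges := by
    intro e he
    induction e using Sym2.ind with
    | _ u v => exact (hEsubG (Or.inr he)).1
  have hsum : (GEdges \ Epos).ncard + Epos.ncard = GEdges.ncard :=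
    Set.ncard_diff_add_ncard_of_subset hEposSub (Set.toFinite _)
  have hvcard : GVerts.ncard = Fintype.card ↥GVerts := by
    rw [Set.ncard_eq_toFinset_card', Set.toFinset_card]
  have hecard : H'.edgeSet.ncard = H'.edgeFinset.card := Set.ncard_eq_toFinset_card' _
  have hpos : 0 < GVerts.ncard := (Set.ncard_pos (Set.toFinite _)).mpr hvne
  omega
end

section
/- Under the setup, for each edge e = (uₑ, vₑ) ∈ E⁺ let γₑ be the set of edges consisting of e together with the edges of the unique path π_T̂(uₑ, vₑ) in the spanning tree T̂. Then: (a) γₑ is contained in the edge set of G; (b) every vertex of K is incident to an even number of edges of γₑ (so γₑ is a 1-cycle over ℤ/2); and (c) the family {γₑ : e ∈ E⁺} is linearly independent over ℤ/2, i.e., for every nonempty subset S ⊆ E⁺ the symmetric difference of the edge sets {γₑ : e ∈ S} is nonempty. (The abstract graph-theoretic form of part (i) of Theorem 3.5: the output graph G_δ contains a basis of cycles, one for each positive edge of persistence greater than δ.) -/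
open SimpleGraph


lemma edge_decomp {V : Type*} {G : SimpleGraph V} {u v a b : V}
    (p : G.Walk u v) (hp : p.IsPath) (h : s(a,b) ∈ p.edges) :
    ∃ a' b', s(a',b') = s(a,b) ∧ ∃ (q₁ : G.Walk u a') (q₂ : G.Walk b' v),
      p.edges = q₁.edges ++ s(a',b') :: q₂.edges ∧ q₁.IsPath ∧ q₂.IsPath ∧
      (∀ x ∈ q₁.support, x ∈ p.support) ∧ (∀ x ∈ q₂.support, x ∈ p.support) ∧
      q₁.length + q₂.length < p.length := by
  induction p with
  | nil => simp at h
  | cons hadj q ih =>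
    rename_i w c v'
    rw [SimpleGraph.Walk.edges_cons, List.mem_cons] at h
    rw [SimpleGraph.Walk.cons_isPath_iff] at hp
    rcases h with h | h
    · refine ⟨w, c, h.symm, Walk.nil, q, ?_, ?_, hp.1, ?_, ?_, ?_⟩
      · simp
      · simp
      · intro x hx; simp at hx; simp [hx]
      · intro x hx; simp [Walk.support_cons]; right; exact hx
      · simp
    · obtain ⟨a', b', hab, q₁, q₂, hedges, hq₁, hq₂, hs₁, hs₂, hlen⟩ := ih hp.1 h
      refine ⟨a', b', hab, Walk.cons hadj q₁, q₂, ?_, ?_, hq₂, ?_, ?_, ?_⟩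
      · simp [Walk.edges_cons, hedges]
      · rw [Walk.cons_isPath_iff]
        exact ⟨hq₁, fun hw => hp.2 (hs₁ w hw)⟩
      · intro x hx
        rw [Walk.support_cons, List.mem_cons] at hx ⊢
        rcases hx with hx | hx
        · exact Or.inl hx
        · exact Or.inr (hs₁ x hx)
      · intro x hx
        rw [Walk.support_cons, List.mem_cons]
        exact Or.inr (hs₂ x hx)
      · simp [Walk.length_cons]; omega

lemma forest_path_edges {V : Type*} [DecidableEq V] {F : SimpleGraph V}
    (hFacyclic : F.IsAcyclic) {root : V → V}
    (hrootConst : ∀ u v : V, F.Reachable u v → root u = root v)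
    (pathToRoot : (v : V) → F.Walk v (root v))
    {a b : V} (q : F.Walk a b) (hq : q.IsPath) :
    ∀ s ∈ q.edges, s ∈ (pathToRoot a).edges ∨ s ∈ (pathToRoot b).edges := by
  have hroot : root a = root b := hrootConst a b ⟨q⟩
  set w : F.Walk a b :=
    (pathToRoot a).append (((pathToRoot b).reverse).copy hroot.symm rfl) with hw
  have huniq : q = w.bypass := by
    have := hFacyclic.path_unique ⟨q, hq⟩ ⟨w.bypass, w.bypass_isPath⟩
    exact congrArg Subtype.val this
  intro s hs
  rw [huniq] at hs
  have hs' : s ∈ w.edges := w.edges_bypass_subset hs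
  rw [hw, Walk.edges_append, Walk.edges_copy, Walk.edges_reverse] at hs'
  rcases List.mem_append.mp hs' with h | h
  · exact Or.inl h
  · exact Or.inr (List.mem_reverse.mp h)

lemma main_edges {V : Type*} [DecidableEq V] {F That : SimpleGraph V}
    (hFacyclic : F.IsAcyclic) {root : V → V}
    (hrootConst : ∀ u v : V, F.Reachable u v → root u = root v)
    (pathToRoot : (v : V) → F.Walk v (root v))
    {Eneg Epos GEdges : Set (Sym2 V)}
    (hThatEdges : That.edgeSet = F.edgeSet ∪ Eneg)
    (hGEdges : GEdges = {s : Sym2 V | ∃ u v : V, s(u, v) ∈ Eneg ∪ Epos ∧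
        (s = s(u, v) ∨ s ∈ (pathToRoot u).edges ∨ s ∈ (pathToRoot v).edges)}) :
    ∀ n : ℕ, ∀ u v : V, ∀ p : That.Walk u v, p.length ≤ n → p.IsPath →
      (∃ y, s(u,y) ∈ Eneg ∪ Epos) → (∃ y, s(v,y) ∈ Eneg ∪ Epos) →
      ∀ s ∈ p.edges, s ∈ GEdges := by
  intro n
  induction n with
  | zero =>
    intro u v p hlen _ _ _ s hs
    have : p.edges.length = 0 := by
      rw [p.length_edges]; omega
    rw [List.length_eq_zero_iff] at this
    rw [this] at hs
    simp at hs
  | succ n ih =>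
    intro u v p hlen hp hGu hGv s hs
    by_cases hF : ∀ t ∈ p.edges, t ∈ F.edgeSet
    · -- all edges in the forest
      have hq := hp.transfer hF
      have hedges := p.edges_transfer hF
      have := forest_path_edges hFacyclic hrootConst pathToRoot
        (p.transfer F hF) hq s (by rw [hedges]; exact hs)
      rw [hGEdges]
      rcases this with h | h
      · obtain ⟨y, hy⟩ := hGu
        exact ⟨u, y, hy, Or.inr (Or.inl h)⟩
      · obtain ⟨y, hy⟩ := hGv
        exact ⟨v, y, hy, Or.inr (Or.inl h)⟩
    · push_neg at hF
      obtain ⟨t, ht, htF⟩ := hF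
      have htNeg : t ∈ Eneg := by
        have := p.edges_subset_edgeSet ht
        rw [hThatEdges] at this
        rcases this with h | h
        · exact absurd h htF
        · exact h
      obtain ⟨a, b, rfl⟩ : ∃ a b, t = s(a,b) := by
        induction t using Sym2.ind with
        | _ x y => exact ⟨x, y, rfl⟩
      obtain ⟨a', b', heq, q₁, q₂, hsplit, hq₁, hq₂, -, -, hlt⟩ :=
        edge_decomp p hp ht
      have hab' : s(a',b') ∈ Eneg := heq ▸ htNeg
      have hGa' : ∃ y, s(a',y) ∈ Eneg ∪ Epos := ⟨b', Or.inl hab'⟩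
      have hGb' : ∃ y, s(b',y) ∈ Eneg ∪ Epos :=
        ⟨a', Or.inl (by rwa [Sym2.eq_swap])⟩
      rw [hsplit] at hs
      rcases List.mem_append.mp hs with h | h
      · exact ih u a' q₁ (by omega) hq₁ hGu hGa' s h
      · rcases List.mem_cons.mp h with h | h
        · rw [hGEdges]
          exact ⟨a', b', Or.inl hab', Or.inl h⟩
        · exact ih b' v q₂ (by omega) hq₂ hGb' hGv s h


lemma incid_eq {V : Type*} [DecidableEq V] {G : SimpleGraph V} {u v : V}
    (p : G.Walk u v) (x : V) :
    p.edges.countP (fun s => decide (x ∈ s)) + (if x = u then 1 else 0)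
      + (if x = v then 1 else 0) = 2 * p.support.count x := by
  induction p with
  | nil =>
    rename_i w
    rcases eq_or_ne x w with h | h <;>
      simp [h, List.count_cons, Ne.symm]
  | cons hadj q ih =>
    rename_i w c v'
    rw [Walk.edges_cons, Walk.support_cons, List.countP_cons, List.count_cons]
    have hne : w ≠ c := hadj.ne
    have hkey : (if (fun s => decide (x ∈ s)) s(w,c) = true then 1 else 0)
        = (if x = w then 1 else 0) + (if x = c then 1 else 0) := by
      by_cases h1 : x = w <;> by_cases h2 : x = c
      · exact absurd (h1 ▸ h2) hne
      · simp [h1, h2, Sym2.mem_iff]; exact hne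
      · simp [h1, h2, Sym2.mem_iff]; exact fun hh => hne hh.symm
      · simp [h1, h2, Sym2.mem_iff]
    have h3 : (if (w == x) = true then 1 else 0) = (if x = w then 1 else 0) := by
      rcases eq_or_ne x w with h | h
      · simp [h]
      · simp [h, Ne.symm h]
    rw [hkey, h3]
    omega

/-- Abstract form of Theorem 3.5 (i): for each e = (uₑ,vₑ) ∈ E⁺ let γ e consist of e together with the edges of the unique path between uₑ and vₑ in T̂. Then (a) γ e ⊆ E(G); (b) each γ e is a 1-cycle over ℤ/2 (every vertex meets an even number of its edges); and (c) the family {γ e : e ∈ E⁺} is linearly independent over ℤ/2: for every nonempty S ⊆ E⁺ some edge lies in an odd number of the γ e, e ∈ S. -/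
theorem theorem_3_5_i_cycle_basis
    {V : Type*} [Fintype V] [DecidableEq V]
    -- `K` is a finite connected simple graph on vertex set `V`
    (K : SimpleGraph V) (hK : K.Connected)
    -- `F` is a spanning forest of `K` (an acyclic subgraph on all of `V`)
    (F : SimpleGraph V) (hFK : F ≤ K) (hFacyclic : F.IsAcyclic)
    -- a choice of root in each connected component of `F`
    (root : V → V)
    (hrootReach : ∀ v : V, F.Reachable v (root v))
    (hrootConst : ∀ u v : V, F.Reachable u v → root u = root v)
    -- `pathToRoot v` is the unique path in `F` from `v` to the root of its component
    (pathToRoot : (v : V) → F.Walk v (root v))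
    (hpathToRoot : ∀ v : V, (pathToRoot v).IsPath)
    -- `Eneg` and `Epos` are disjoint sets of edges of `K`, disjoint from the edges of `F`
    (Eneg Epos : Set (Sym2 V))
    (hEnegK : Eneg ⊆ K.edgeSet) (hEposK : Epos ⊆ K.edgeSet)
    (hdisjNP : Disjoint Eneg Epos)
    (hdisjNF : Disjoint Eneg F.edgeSet) (hdisjPF : Disjoint Epos F.edgeSet)
    -- `That` (= T̂) is the spanning tree with edge set E(F) ∪ Eneg
    (That : SimpleGraph V)
    (hThatEdges : That.edgeSet = F.edgeSet ∪ Eneg)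
    (hThatTree : That.IsTree)
    -- `GEdges` is the edge set of the output graph G: the union over e = (u,v) ∈ Eneg ∪ Epos
    -- of {e} ∪ path(u) ∪ path(v); `GVerts` is the set of vertices incident to an edge of G
    (GEdges : Set (Sym2 V))
    (hGEdges : GEdges = {s : Sym2 V | ∃ u v : V, s(u, v) ∈ Eneg ∪ Epos ∧
        (s = s(u, v) ∨ s ∈ (pathToRoot u).edges ∨ s ∈ (pathToRoot v).edges)})
    (GVerts : Set V)
    (hGVerts : GVerts = {x : V | ∃ s ∈ GEdges, x ∈ s})
    (γ : Sym2 V → Set (Sym2 V))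
    (hγ : ∀ e ∈ Epos, ∃ (u v : V) (p : That.Walk u v), e = s(u, v) ∧ p.IsPath ∧
        γ e = insert e {s : Sym2 V | s ∈ p.edges}) :
    (∀ e ∈ Epos, γ e ⊆ GEdges) ∧
    (∀ e ∈ Epos, ∀ x : V, Even {s | s ∈ γ e ∧ x ∈ s}.ncard) ∧
    (∀ S : Set (Sym2 V), S ⊆ Epos → S.Nonempty →
      ∃ s : Sym2 V, Odd {e | e ∈ S ∧ s ∈ γ e}.ncard) := by
  -- a positive edge is never an edge of a `That`-walk
  have hPosNotThat : ∀ e ∈ Epos, e ∉ That.edgeSet := by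
    intro e he hmem
    rw [hThatEdges] at hmem
    rcases hmem with h | h
    · exact Set.disjoint_left.mp hdisjPF he h
    · exact Set.disjoint_left.mp hdisjNP.symm he h
  refine ⟨?_, ?_, ?_⟩
  · -- part (a)
    intro e he s hs
    obtain ⟨u, v, p, heq, hp, hγe⟩ := hγ e he
    have hGu : ∃ y, s(u,y) ∈ Eneg ∪ Epos := ⟨v, Or.inr (heq ▸ he)⟩
    have hGv : ∃ y, s(v,y) ∈ Eneg ∪ Epos :=
      ⟨u, Or.inr (by rw [Sym2.eq_swap]; exact heq ▸ he)⟩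
    rw [hγe, Set.mem_insert_iff] at hs
    rcases hs with rfl | hs
    · rw [hGEdges]
      exact ⟨u, v, Or.inr (heq ▸ he), Or.inl heq⟩
    · exact main_edges hFacyclic hrootConst pathToRoot hThatEdges hGEdges
        p.length u v p le_rfl hp hGu hGv s hs
  · -- part (b)
    intro e he x
    obtain ⟨u, v, p, heq, hp, hγe⟩ := hγ e he
    have hne : u ≠ v := by
      have : K.Adj u v := by
        rw [← SimpleGraph.mem_edgeSet, ← heq]; exact hEposK he
      exact this.ne
    have henp : e ∉ p.edges := fun h => hPosNotThat e he (p.edges_subset_edgeSet h)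
    have hnodup : (e :: p.edges).Nodup := List.nodup_cons.mpr ⟨henp, hp.edges_nodup⟩
    have hset : {s | s ∈ γ e ∧ x ∈ s} =
        ↑(((e :: p.edges).filter (fun s => decide (x ∈ s))).toFinset) := by
      ext s
      simp only [Set.mem_setOf_eq, Finset.coe_sort_coe, List.coe_toFinset,
        List.mem_filter, List.mem_cons, hγe, Set.mem_insert_iff,
        decide_eq_true_eq]
    have hcard : {s | s ∈ γ e ∧ x ∈ s}.ncard =
        (e :: p.edges).countP (fun s => decide (x ∈ s)) := by
      rw [hset, Set.ncard_coe_finset,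
        List.toFinset_card_of_nodup (hnodup.filter _),
        List.countP_eq_length_filter]
    have hcnt := incid_eq p x
    have hee : (if (fun s => decide (x ∈ s)) e = true then 1 else 0)
        = (if x = u then 1 else 0) + (if x = v then 1 else 0) := by
      subst heq
      by_cases h1 : x = u <;> by_cases h2 : x = v
      · exact absurd (h1 ▸ h2) hne
      · simp [h1, h2, Sym2.mem_iff]; exact hne
      · simp [h1, h2, Sym2.mem_iff]; exact fun hh => hne hh.symm
      · simp [h1, h2, Sym2.mem_iff]
    rw [Nat.even_iff, hcard, List.countP_cons, hee]
    omega
  · -- part (c)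
    intro S hS hSne
    obtain ⟨e, heS⟩ := hSne
    refine ⟨e, ?_⟩
    have : {e' | e' ∈ S ∧ e ∈ γ e'} = {e} := by
      ext e'
      simp only [Set.mem_setOf_eq, Set.mem_singleton_iff]
      constructor
      · rintro ⟨he'S, heγ⟩
        obtain ⟨u, v, p, heq, hp, hγe'⟩ := hγ e' (hS he'S)
        rw [hγe', Set.mem_insert_iff] at heγ
        rcases heγ with h | h
        · exact h.symm
        · exact absurd (p.edges_subset_edgeSet h) (hPosNotThat e (hS heS))
      · rintro rfl
        obtain ⟨u, v, p, heq, hp, hγe⟩ := hγ e' (hS heS)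
        exact ⟨heS, by rw [hγe]; exact Set.mem_insert _ _⟩
    rw [this, Set.ncard_singleton]
    exact odd_one
end

section
/- Under the setup, every simple cycle of Ĝ — i.e., every closed walk in Ĝ of positive length that repeats no vertex except that its initial and final vertices coincide — has all of its edges in G. (The consequence of Lemmas 4.1 and 4.2 used to deduce Theorem 3.5 for G_δ from the corresponding statements for Ĝ_δ.) -/
/-!
Edges of `Eneg ∪ Epos` lie in `G` by definition, so let `e = s(a, b)` be a forest edge on a
simple cycle of `Ĝ`. Being an edge of a forest, `e` is a bridge of `F`; removing it splits the
tree of `F` containing it into the side of `a` and the side of `b`, and the root lies on one of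
them, say not on the side of `a`. Since `e` lies on a cycle of `Ĝ`, the graph `Ĝ - e` still
connects `a` to `b`, so some edge `s(u, w)` of `Ĝ - e` leaves the side of `a`. The only forest
edge leaving that side is `e`, hence `s(u, w) ∈ Eneg ∪ Epos`, and the path from `u` to the root
must cross from the side of `a` to the other one, i.e. it uses `e`. So `e ∈ path(u) ⊆ G`.
-/

open SimpleGraph

namespace SimpleGraph

variable {V : Type*} {F H : SimpleGraph V} {a b : V}

lemma Reachable.exists_adj_not_adj_of_not_reachable (hH : H.Reachable a b)
    (hF : ¬ F.Reachable a b) :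
    ∃ u w, H.Adj u w ∧ ¬ F.Adj u w ∧ F.Reachable a u ∧ ¬ F.Reachable a w := by
  obtain ⟨p⟩ := hH
  obtain ⟨d, -, hu, hw⟩ := p.exists_boundary_dart {x | F.Reachable a x} (Reachable.refl a) hF
  exact ⟨d.fst, d.snd, d.adj, fun h => hw (hu.trans h.reachable), hu, hw⟩

lemma IsBridge.not_reachable_or_not_reachable (h : F.IsBridge s(a, b)) (r : V) :
    ¬ (F.deleteEdges {s(a, b)}).Reachable a r ∨ ¬ (F.deleteEdges {s(a, b)}).Reachable b r := by
  by_contra! hr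
  exact h (hr.1.trans hr.2.symm)

lemma IsBridge.exists_mem_edges_pathToRoot {S : Set (Sym2 V)} {root : V → V}
    (hroot : ∀ u v, F.Reachable u v → root u = root v) (pathToRoot : (v : V) → F.Walk v (root v))
    (hHF : H.edgeSet ⊆ F.edgeSet ∪ S) (hbr : F.IsBridge s(a, b))
    (hH : (H.deleteEdges {s(a, b)}).Reachable a b)
    (ha : ¬ (F.deleteEdges {s(a, b)}).Reachable a (root a)) :
    ∃ u w, s(u, w) ∈ S ∧ s(a, b) ∈ (pathToRoot u).edges := by
  obtain ⟨u, w, hHuw, hFuw, hau, -⟩ := hH.exists_adj_not_adj_of_not_reachable hbr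
  rw [deleteEdges_adj] at hHuw hFuw
  refine ⟨u, w, ?_, (pathToRoot u).mem_edges_of_not_reachable_deleteEdges fun hu => ?_⟩
  · exact (hHF hHuw.1).resolve_left fun hF => hFuw ⟨hF, hHuw.2⟩
  · rw [hroot u a (hau.mono (deleteEdges_le _)).symm] at hu
    exact ha (hau.trans hu)

end SimpleGraph

theorem simple_cycles_of_Ghat_in_G_general
    {V : Type*}
    -- `F` is a spanning forest of `K` (an acyclic subgraph on all of `V`)
    (F : SimpleGraph V) (hFacyclic : F.IsAcyclic)
    -- a choice of root in each connected component of `F`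
    (root : V → V)
    (hrootConst : ∀ u v : V, F.Reachable u v → root u = root v)
    -- `pathToRoot v` is the unique path in `F` from `v` to the root of its component
    (pathToRoot : (v : V) → F.Walk v (root v))
    -- `Eneg` and `Epos` are disjoint sets of edges of `K`, disjoint from the edges of `F`
    (Eneg Epos : Set (Sym2 V))
    -- `GEdges` is the edge set of the output graph G: the union over e = (u,v) ∈ Eneg ∪ Epos
    -- of {e} ∪ path(u) ∪ path(v); `GVerts` is the set of vertices incident to an edge of G
    (GEdges : Set (Sym2 V))
    (hGEdges : GEdges = {s : Sym2 V | ∃ u v : V, s(u, v) ∈ Eneg ∪ Epos ∧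
        (s = s(u, v) ∨ s ∈ (pathToRoot u).edges ∨ s ∈ (pathToRoot v).edges)}) :
    ∀ (v : V) (c : (SimpleGraph.fromEdgeSet (F.edgeSet ∪ Eneg ∪ Epos)).Walk v v),
      c.IsCycle → ∀ e ∈ c.edges, e ∈ GEdges := by
  intro v c hc e he
  subst hGEdges
  induction e using Sym2.ind with | _ a b => ?_
  have hsub : (fromEdgeSet (F.edgeSet ∪ Eneg ∪ Epos)).edgeSet ⊆ F.edgeSet ∪ (Eneg ∪ Epos) := by
    rw [edgeSet_fromEdgeSet, Set.union_assoc]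
    exact Set.sdiff_subset
  have hreach := (adj_and_reachable_delete_edges_iff_exists_cycle.mpr ⟨v, c, hc, he⟩).2
  rcases hsub (c.edges_subset_edgeSet he) with hab | hS
  · have hbr := isAcyclic_iff_forall_adj_isBridge.mp hFacyclic
    rw [mem_edgeSet] at hab
    rcases (hbr hab).not_reachable_or_not_reachable (root a) with ha | hb
    · obtain ⟨u, w, hS, hpath⟩ :=
        (hbr hab).exists_mem_edges_pathToRoot hrootConst pathToRoot hsub hreach ha
      exact ⟨u, w, hS, .inr (.inl hpath)⟩
    · rw [hrootConst a b hab.reachable, Sym2.eq_swap] at hb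
      rw [Sym2.eq_swap] at hreach ⊢
      obtain ⟨u, w, hS, hpath⟩ :=
        (hbr hab.symm).exists_mem_edges_pathToRoot hrootConst pathToRoot hsub hreach.symm hb
      exact ⟨u, w, hS, .inr (.inl hpath)⟩
  · exact ⟨a, b, hS, .inl rfl⟩

/-- Consequence of Lemmas 4.1 and 4.2 used to deduce Theorem 3.5: every simple cycle of Ĝ has all of its edges in G. -/
theorem simple_cycles_of_Ghat_in_G
    {V : Type*} [Fintype V] [DecidableEq V]
    -- `K` is a finite connected simple graph on vertex set `V`
    (K : SimpleGraph V) (hK : K.Connected)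
    -- `F` is a spanning forest of `K` (an acyclic subgraph on all of `V`)
    (F : SimpleGraph V) (hFK : F ≤ K) (hFacyclic : F.IsAcyclic)
    -- a choice of root in each connected component of `F`
    (root : V → V)
    (hrootReach : ∀ v : V, F.Reachable v (root v))
    (hrootConst : ∀ u v : V, F.Reachable u v → root u = root v)
    -- `pathToRoot v` is the unique path in `F` from `v` to the root of its component
    (pathToRoot : (v : V) → F.Walk v (root v))
    (hpathToRoot : ∀ v : V, (pathToRoot v).IsPath)
    -- `Eneg` and `Epos` are disjoint sets of edges of `K`, disjoint from the edges of `F`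
    (Eneg Epos : Set (Sym2 V))
    (hEnegK : Eneg ⊆ K.edgeSet) (hEposK : Epos ⊆ K.edgeSet)
    (hdisjNP : Disjoint Eneg Epos)
    (hdisjNF : Disjoint Eneg F.edgeSet) (hdisjPF : Disjoint Epos F.edgeSet)
    -- `That` (= T̂) is the spanning tree with edge set E(F) ∪ Eneg
    (That : SimpleGraph V)
    (hThatEdges : That.edgeSet = F.edgeSet ∪ Eneg)
    (hThatTree : That.IsTree)
    -- `GEdges` is the edge set of the output graph G: the union over e = (u,v) ∈ Eneg ∪ Epos
    -- of {e} ∪ path(u) ∪ path(v); `GVerts` is the set of vertices incident to an edge of G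
    (GEdges : Set (Sym2 V))
    (hGEdges : GEdges = {s : Sym2 V | ∃ u v : V, s(u, v) ∈ Eneg ∪ Epos ∧
        (s = s(u, v) ∨ s ∈ (pathToRoot u).edges ∨ s ∈ (pathToRoot v).edges)})
    (GVerts : Set V)
    (hGVerts : GVerts = {x : V | ∃ s ∈ GEdges, x ∈ s}) :
    ∀ (v : V) (c : (SimpleGraph.fromEdgeSet (F.edgeSet ∪ Eneg ∪ Epos)).Walk v v),
      c.IsCycle → ∀ e ∈ c.edges, e ∈ GEdges :=
  simple_cycles_of_Ghat_in_G_general F hFacyclic root hrootConst pathToRoot Eneg Epos GEdges hGEdges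
end

section
/- Under the setup, let u, v ∈ V and let e₁ = (u₁, v₁), …, e_k = (u_k, v_k) be the edges of the unique path π_T̂(u, v) that belong to E⁻, listed in the order they occur along the path from u to v (so that, setting u₀ = u and v_{k+1} = v, the vertices uᵢ and v_{i+1} lie in the same connected component of 𝒯 for every 0 ≤ i ≤ k). Then the edge set of π_T̂(u, v) is contained in path(u) ∪ path(v) ∪ ⋃_{i=1}^{k} ({eᵢ} ∪ path(uᵢ) ∪ path(vᵢ)). (The inductive containment established in the proof of Lemma 4.4.) -/
/-!
An edge `e` of the tree path `p` that is not in `E⁻` lies on a stretch of `p` that avoids `E⁻`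
and ends at `u`, `v` or endpoints of `E⁻`-edges of `p`, i.e. at two of the vertices `u, v, uᵢ, vᵢ`,
say `a` and `b`. That stretch is a path in the forest `F`. Since `F` is acyclic, it is the
unique `F`-path from `a` to `b`, so its edges lie on the walk `path(a)` followed by `path(b)`
reversed, which runs from `a` to `b` through their common root.
-/

namespace SimpleGraph

variable {V : Type*} {G H : SimpleGraph V}

lemma IsAcyclic.edges_subset_of_isPath [DecidableEq V] (hG : G.IsAcyclic) {a b : V}
    {q : G.Walk a b} (hq : q.IsPath) (w : G.Walk a b) : q.edges ⊆ w.edges := by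
  have hq_eq : (⟨q, hq⟩ : G.Path a b) = ⟨w.bypass, w.bypass_isPath⟩ :=
    (hG.subsingleton_path a b).elim _ _
  rw [show q = w.bypass from congrArg Subtype.val hq_eq]
  exact w.edges_bypass_subset_edges

lemma IsAcyclic.mem_edges_or_mem_edges_of_isPath [DecidableEq V] (hG : G.IsAcyclic)
    {a b r : V} {q : G.Walk a b} (hq : q.IsPath) (ra : G.Walk a r) (rb : G.Walk b r)
    {e : Sym2 V} (he : e ∈ q.edges) : e ∈ ra.edges ∨ e ∈ rb.edges := by
  simpa [Walk.edges_append, Walk.edges_reverse] using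
    hG.edges_subset_of_isPath hq (ra.append rb.reverse) he

namespace Walk

variable {S : Set (Sym2 V)}

lemma exists_prefix_of_edgeSet_diff_subset (hGH : G.edgeSet \ S ⊆ H.edgeSet) :
    ∀ {u v : V} (p : G.Walk u v), ∃ b, (b = v ∨ ∃ f ∈ p.edges, f ∈ S ∧ b ∈ f) ∧
      ∃ w : H.Walk u b, w.support.Sublist p.support
  | _, _, nil => ⟨_, Or.inl rfl, nil, by simp⟩
  | x, _, cons (v := y) hxy p => by
    by_cases hS : s(x, y) ∈ S
    · exact ⟨x, Or.inr ⟨s(x, y), by simp, hS, by simp⟩, nil, by simp⟩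
    · have hH : H.Adj x y := hGH ⟨hxy, hS⟩
      obtain ⟨b, hb, w, hw⟩ := exists_prefix_of_edgeSet_diff_subset hGH p
      refine ⟨b, ?_, cons hH w, by simpa using hw⟩
      rcases hb with rfl | ⟨f, hfp, hfS, hbf⟩
      exacts [Or.inl rfl, Or.inr ⟨f, by simp [hfp], hfS, hbf⟩]

lemma exists_subwalk_mem_edges_of_notMem (hGH : G.edgeSet \ S ⊆ H.edgeSet) :
    ∀ {u v : V} (p : G.Walk u v) {e : Sym2 V}, e ∈ p.edges → e ∉ S →
      ∃ a b, (a = u ∨ ∃ f ∈ p.edges, f ∈ S ∧ a ∈ f) ∧ (b = v ∨ ∃ f ∈ p.edges, f ∈ S ∧ b ∈ f) ∧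
        ∃ w : H.Walk a b, w.support.Sublist p.support ∧ e ∈ w.edges
  | _, _, nil, _, he, _ => by simp at he
  | x, z, cons (v := y) hxy p, e, he, heS => by
    have lift_end : ∀ {b}, (b = z ∨ ∃ f ∈ p.edges, f ∈ S ∧ b ∈ f) →
        (b = z ∨ ∃ f ∈ (cons hxy p).edges, f ∈ S ∧ b ∈ f) := fun hb =>
      hb.imp_right fun ⟨f, hfp, hfS, hbf⟩ => ⟨f, by simp [hfp], hfS, hbf⟩
    rcases List.mem_cons.1 (by simpa using he) with rfl | he
    · obtain ⟨b, hb, w, hw⟩ := exists_prefix_of_edgeSet_diff_subset hGH p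
      have hH : H.Adj x y := hGH ⟨hxy, heS⟩
      exact ⟨x, b, Or.inl rfl, lift_end hb, cons hH w, by simpa using hw, by simp⟩
    obtain ⟨a, b, ha, hb, w, hw, hew⟩ := exists_subwalk_mem_edges_of_notMem hGH p he heS
    have hw' : w.support.Sublist (cons hxy p).support := by simpa using hw.cons x
    rcases ha with rfl | ⟨f, hfp, hfS, haf⟩
    · by_cases hS : s(x, a) ∈ S
      · exact ⟨a, b, Or.inr ⟨s(x, a), by simp, hS, by simp⟩, lift_end hb, w, hw', hew⟩
      · have hH : H.Adj x a := hGH ⟨hxy, hS⟩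
        exact ⟨x, b, Or.inl rfl, lift_end hb, cons hH w, by simpa using hw, by simp [hew]⟩
    · exact ⟨a, b, Or.inr ⟨f, by simp [hfp], hfS, haf⟩, lift_end hb, w, hw', hew⟩

end Walk

end SimpleGraph

theorem lemma_4_4_inductive_containment_general
    {V : Type*} [DecidableEq V]
    -- `F` is a spanning forest of `K` (an acyclic subgraph on all of `V`)
    (F : SimpleGraph V) (hFacyclic : F.IsAcyclic)
    -- a choice of root in each connected component of `F`
    (root : V → V)
    (hrootConst : ∀ u v : V, F.Reachable u v → root u = root v)
    -- `pathToRoot v` is the unique path in `F` from `v` to the root of its component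
    (pathToRoot : (v : V) → F.Walk v (root v))
    -- `Eneg` and `Epos` are disjoint sets of edges of `K`, disjoint from the edges of `F`
    (Eneg : Set (Sym2 V))
    -- `That` (= T̂) is the spanning tree with edge set E(F) ∪ Eneg
    (That : SimpleGraph V)
    (hThatEdges : That.edgeSet = F.edgeSet ∪ Eneg)
    [DecidablePred (· ∈ Eneg)]
    (u v : V) (p : That.Walk u v) (hp : p.IsPath)
    (k : ℕ) (U W : Fin (k + 1) → V)
    (hfilter : p.edges.filter (· ∈ Eneg)
        = List.ofFn (fun j : Fin k => s(U j.succ, W j.castSucc))) :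
    ∀ e ∈ p.edges,
      e ∈ (pathToRoot u).edges ∨ e ∈ (pathToRoot v).edges ∨
        ∃ j : Fin k, e = s(U j.succ, W j.castSucc) ∨
          e ∈ (pathToRoot (U j.succ)).edges ∨ e ∈ (pathToRoot (W j.castSucc)).edges := by
  have hEneg : ∀ {f}, f ∈ p.edges → f ∈ Eneg → ∃ j : Fin k, s(U j.succ, W j.castSucc) = f :=
    fun hfp hfN => List.mem_ofFn.1 (hfilter ▸ List.mem_filter.2 ⟨hfp, decide_eq_true hfN⟩)
  intro e he
  by_cases heN : e ∈ Eneg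
  · obtain ⟨j, rfl⟩ := hEneg he heN
    exact Or.inr (Or.inr ⟨j, Or.inl rfl⟩)
  have hThatF : That.edgeSet \ Eneg ⊆ F.edgeSet := by
    rw [hThatEdges, Set.union_sdiff_right]
    exact Set.sdiff_subset
  obtain ⟨a, b, ha, hb, w, hwp, hew⟩ := p.exists_subwalk_mem_edges_of_notMem hThatF he heN
  have hw : w.IsPath := .mk' (hp.support_nodup.sublist hwp)
  have hroot : root b = root a := (hrootConst a b w.reachable).symm
  obtain ⟨c, hc, hec⟩ : ∃ c, (c = u ∨ c = v ∨ ∃ f ∈ p.edges, f ∈ Eneg ∧ c ∈ f) ∧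
      e ∈ (pathToRoot c).edges := by
    rcases hFacyclic.mem_edges_or_mem_edges_of_isPath hw (pathToRoot a)
      ((pathToRoot b).copy rfl hroot) hew with h | h
    · exact ⟨a, ha.imp_right Or.inr, h⟩
    · exact ⟨b, Or.inr hb, by simpa using h⟩
  rcases hc with rfl | rfl | ⟨f, hfp, hfN, hcf⟩
  · exact Or.inl hec
  · exact Or.inr (Or.inl hec)
  · obtain ⟨j, rfl⟩ := hEneg hfp hfN
    rcases Sym2.mem_iff.1 hcf with rfl | rfl
    exacts [Or.inr (Or.inr ⟨j, Or.inr (Or.inl hec)⟩), Or.inr (Or.inr ⟨j, Or.inr (Or.inr hec)⟩)]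

/-- The inductive containment in the proof of Lemma 4.4: if the edges of the unique path in T̂ from u to v that belong to E⁻ are, in order, eᵢ = (uᵢ, vᵢ) for i = 1, …, k (with u₀ = u, v_{k+1} = v, and uᵢ in the same F-component as v_{i+1} for 0 ≤ i ≤ k), then the edge set of the path is contained in path(u) ∪ path(v) ∪ ⋃ᵢ ({eᵢ} ∪ path(uᵢ) ∪ path(vᵢ)). Here `U i` stands for uᵢ (0 ≤ i ≤ k) and `W i` stands for v_{i+1} (0 ≤ i ≤ k), so eᵢ = s(U i, W (i-1)) for 1 ≤ i ≤ k. -/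
theorem lemma_4_4_inductive_containment
    {V : Type*} [Fintype V] [DecidableEq V]
    -- `K` is a finite connected simple graph on vertex set `V`
    (K : SimpleGraph V) (hK : K.Connected)
    -- `F` is a spanning forest of `K` (an acyclic subgraph on all of `V`)
    (F : SimpleGraph V) (hFK : F ≤ K) (hFacyclic : F.IsAcyclic)
    -- a choice of root in each connected component of `F`
    (root : V → V)
    (hrootReach : ∀ v : V, F.Reachable v (root v))
    (hrootConst : ∀ u v : V, F.Reachable u v → root u = root v)
    -- `pathToRoot v` is the unique path in `F` from `v` to the root of its component
    (pathToRoot : (v : V) → F.Walk v (root v))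
    (hpathToRoot : ∀ v : V, (pathToRoot v).IsPath)
    -- `Eneg` and `Epos` are disjoint sets of edges of `K`, disjoint from the edges of `F`
    (Eneg Epos : Set (Sym2 V))
    (hEnegK : Eneg ⊆ K.edgeSet) (hEposK : Epos ⊆ K.edgeSet)
    (hdisjNP : Disjoint Eneg Epos)
    (hdisjNF : Disjoint Eneg F.edgeSet) (hdisjPF : Disjoint Epos F.edgeSet)
    -- `That` (= T̂) is the spanning tree with edge set E(F) ∪ Eneg
    (That : SimpleGraph V)
    (hThatEdges : That.edgeSet = F.edgeSet ∪ Eneg)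
    (hThatTree : That.IsTree)
    -- `GEdges` is the edge set of the output graph G: the union over e = (u,v) ∈ Eneg ∪ Epos
    -- of {e} ∪ path(u) ∪ path(v); `GVerts` is the set of vertices incident to an edge of G
    (GEdges : Set (Sym2 V))
    (hGEdges : GEdges = {s : Sym2 V | ∃ u v : V, s(u, v) ∈ Eneg ∪ Epos ∧
        (s = s(u, v) ∨ s ∈ (pathToRoot u).edges ∨ s ∈ (pathToRoot v).edges)})
    (GVerts : Set V)
    (hGVerts : GVerts = {x : V | ∃ s ∈ GEdges, x ∈ s})
    [DecidablePred (· ∈ Eneg)]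
    (u v : V) (p : That.Walk u v) (hp : p.IsPath)
    (k : ℕ) (U W : Fin (k + 1) → V)
    (hU0 : U 0 = u) (hWlast : W (Fin.last k) = v)
    (hfilter : p.edges.filter (· ∈ Eneg)
        = List.ofFn (fun j : Fin k => s(U j.succ, W j.castSucc)))
    (hcomp : ∀ i : Fin (k + 1), F.Reachable (U i) (W i)) :
    ∀ e ∈ p.edges,
      e ∈ (pathToRoot u).edges ∨ e ∈ (pathToRoot v).edges ∨
        ∃ j : Fin k, e = s(U j.succ, W j.castSucc) ∨
          e ∈ (pathToRoot (U j.succ)).edges ∨ e ∈ (pathToRoot (W j.castSucc)).edges :=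
  lemma_4_4_inductive_containment_general F hFacyclic root hrootConst pathToRoot Eneg That
    hThatEdges u v p hp k U W hfilter
end
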